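/- arXiv:2507.13804 — 6 statements merged into one kernel-verified Lean document; each statement's English description precedes it below -/
import Mathlib

section
/- Let g : ℝ² → ℝ² be defined as follows (a gradient descent counterexample). There exists a C^∞ function f : ℝ² → ℝ such that f(x) = (x₁² − x₂²)/2 for all x with ‖x‖ ≤ 1 and f(x) = ‖x‖²/2 = (x₁² + x₂²)/2 for all x with ‖x‖ ≥ 2. Consequently, the origin is a strict saddle of f (∇f(0) = 0 and ∇²f(0) has the negative eigenvalue −1), and the gradient descent map g(x) = x − ∇f(x) with step size α = 1 satisfies g(x) = 0 for all x with ‖x‖ > 2; hence the set of initial points from which gradient descent with step size 1 converges to a strict saddle of f has positive (indeed infinite) Lebesgue measure. -/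
open MeasureTheory Filter Topology InnerProductSpace

noncomputable section

/-- A strict saddle of a `C²` function `f : ℝⁿ → ℝ`: the gradient vanishes and the Hessian
(the derivative of the gradient) has a negative eigenvalue. -/
def IsStrictSaddle {n : ℕ} (f : EuclideanSpace ℝ (Fin n) → ℝ)
    (p : EuclideanSpace ℝ (Fin n)) : Prop :=
  gradient f p = 0 ∧
    ∃ μ : ℝ, μ < 0 ∧ ∃ v : EuclideanSpace ℝ (Fin n), v ≠ 0 ∧
      fderiv ℝ (gradient f) p v = μ • v

abbrev E2 := EuclideanSpace ℝ (Fin 2)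

def bump : ContDiffBump (0:ℝ) := ⟨1, 4, one_pos, by norm_num⟩

def myf : E2 → ℝ := fun x => ‖x‖^2/2 - (x 1)^2 * bump (‖x‖^2)

def E₁ : E2 := EuclideanSpace.single 1 (1:ℝ)

lemma norm_sq_eq' (x : E2) : ‖x‖^2 = x 0 ^ 2 + x 1 ^ 2 := by
  rw [EuclideanSpace.norm_eq, Real.sq_sqrt (by positivity)]
  simp [Fin.sum_univ_two, sq_abs]

lemma myf_smooth : ContDiff ℝ (⊤:ℕ∞) myf := by
  apply ContDiff.sub
  · exact (contDiff_norm_sq ℝ).div_const 2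
  · exact (((EuclideanSpace.proj (1 : Fin 2) : E2 →L[ℝ] ℝ).contDiff).pow 2).mul
      (bump.contDiff.comp (contDiff_norm_sq ℝ))

lemma myf_inner (x : E2) (hx : ‖x‖ ≤ 1) : myf x = ‖x‖^2/2 - (x 1)^2 := by
  have hb : bump (‖x‖^2) = 1 := by
    apply bump.one_of_mem_closedBall
    simp only [Metric.mem_closedBall, Real.dist_eq, sub_zero]
    rw [abs_of_nonneg (by positivity)]
    show ‖x‖^2 ≤ bump.rIn
    show ‖x‖^2 ≤ 1
    nlinarith [norm_nonneg x]
  rw [myf, hb]; ring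

lemma myf_outer (x : E2) (hx : 2 ≤ ‖x‖) : myf x = ‖x‖^2/2 := by
  have hb : bump (‖x‖^2) = 0 := by
    apply bump.zero_of_le_dist
    show bump.rOut ≤ _
    show (4:ℝ) ≤ dist (‖x‖^2) 0
    rw [Real.dist_eq, sub_zero, abs_of_nonneg (by positivity)]
    nlinarith
  rw [myf, hb]; ring

lemma gradient_congr {f g : E2 → ℝ} {y : E2} (h : f =ᶠ[𝓝 y] g) :
    gradient f y = gradient g y := by
  unfold gradient; rw [h.fderiv_eq]

lemma hasGradient_s (y : E2) :
    HasGradientAt (fun x : E2 => ‖x‖^2/2 - (x 1)^2) (y - (2*(y 1)) • E₁) y := by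
  rw [hasGradientAt_iff_hasFDerivAt]
  have hp : HasFDerivAt (fun x : E2 => x 1) (EuclideanSpace.proj (1:Fin 2) : E2 →L[ℝ] ℝ) y :=
    (EuclideanSpace.proj (1:Fin 2) : E2 →L[ℝ] ℝ).hasFDerivAt
  have h2 : HasFDerivAt (fun x : E2 => (x 1)^2)
      ((y 1) • (EuclideanSpace.proj (1:Fin 2) : E2 →L[ℝ] ℝ)
        + (y 1) • (EuclideanSpace.proj (1:Fin 2) : E2 →L[ℝ] ℝ)) y := by
    have h := hp.mul hp; simp only [pow_two]; exact h
  have h1 : HasFDerivAt (fun x : E2 => ‖x‖^2/2) ((2:ℝ)⁻¹ • (2 • (innerSL ℝ y))) y := by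
    have h := ((hasStrictFDerivAt_norm_sq y).hasFDerivAt).const_smul ((2:ℝ)⁻¹)
    simp only [div_eq_inv_mul]; exact h
  refine (h1.sub h2).congr_fderiv ?_
  ext w
  have hw : (EuclideanSpace.proj (1:Fin 2) : E2 →L[ℝ] ℝ) w = w 1 := rfl
  simp only [toDual_apply_apply, ContinuousLinearMap.sub_apply, ContinuousLinearMap.add_apply,
    ContinuousLinearMap.smul_apply, innerSL_apply_apply, hw,
    inner_sub_left, real_inner_smul_left, smul_eq_mul]
  have : ⟪E₁, w⟫_ℝ = w 1 := by
    simp [E₁, EuclideanSpace.inner_single_left]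
  rw [this]; ring

lemma hasGradient_q (y : E2) : HasGradientAt (fun x : E2 => ‖x‖^2/2) y y := by
  rw [hasGradientAt_iff_hasFDerivAt]
  have h1 : HasFDerivAt (fun x : E2 => ‖x‖^2/2) ((2:ℝ)⁻¹ • (2 • (innerSL ℝ y))) y := by
    have h := ((hasStrictFDerivAt_norm_sq y).hasFDerivAt).const_smul ((2:ℝ)⁻¹)
    simp only [div_eq_inv_mul]; exact h
  refine h1.congr_fderiv ?_
  ext w
  simp only [toDual_apply_apply, ContinuousLinearMap.smul_apply, innerSL_apply_apply, smul_eq_mul]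
  ring

lemma grad_inner (y : E2) (hy : ‖y‖ < 1) : gradient myf y = y - (2*(y 1)) • E₁ := by
  have hev : myf =ᶠ[𝓝 y] (fun x : E2 => ‖x‖^2/2 - (x 1)^2) := by
    filter_upwards [Metric.ball_mem_nhds y (by linarith : (0:ℝ) < 1 - ‖y‖)] with z hz
    apply myf_inner
    have := mem_ball_iff_norm.mp hz
    calc ‖z‖ = ‖y + (z - y)‖ := by rw [show y + (z - y) = z by abel]
    _ ≤ ‖y‖ + ‖z - y‖ := norm_add_le _ _
    _ ≤ _ := by linarith
  rw [gradient_congr hev, (hasGradient_s y).gradient]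

lemma grad_outer (y : E2) (hy : 2 < ‖y‖) : gradient myf y = y := by
  have hev : myf =ᶠ[𝓝 y] (fun x : E2 => ‖x‖^2/2) := by
    have hopen : IsOpen {x : E2 | 2 < ‖x‖} := isOpen_lt continuous_const continuous_norm
    filter_upwards [hopen.mem_nhds hy] with z hz
    exact myf_outer z (le_of_lt hz)
  rw [gradient_congr hev, (hasGradient_q y).gradient]

lemma grad_zero : gradient myf 0 = 0 := by
  rw [grad_inner 0 (by simp)]
  simp

def Lmap : E2 →L[ℝ] E2 :=
  ContinuousLinearMap.id ℝ E2
    - (2:ℝ) • ((EuclideanSpace.proj (1:Fin 2) : E2 →L[ℝ] ℝ).smulRight E₁)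

lemma E₁_apply_one : E₁ 1 = 1 := by simp [E₁]

lemma E₁_ne : E₁ ≠ 0 := by
  intro h
  have := E₁_apply_one
  rw [h] at this
  simp at this

lemma fderiv_grad : fderiv ℝ (gradient myf) 0 = Lmap := by
  have hev : gradient myf =ᶠ[𝓝 (0:E2)] (Lmap : E2 → E2) := by
    filter_upwards [Metric.ball_mem_nhds (0:E2) one_pos] with z hz
    rw [grad_inner z (mem_ball_zero_iff.mp hz)]
    simp [Lmap, ContinuousLinearMap.smulRight_apply, smul_smul]
  rw [hev.fderiv_eq, Lmap.fderiv]

lemma eigen : fderiv ℝ (gradient myf) 0 E₁ = (-1 : ℝ) • E₁ := by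
  rw [fderiv_grad]
  have h : Lmap E₁ = E₁ - (2:ℝ) • ((E₁ 1) • E₁) := rfl
  rw [h, E₁_apply_one, one_smul, two_smul ℝ E₁, neg_one_smul]
  abel

/-- Gradient descent counterexample: there is a smooth `f : ℝ² → ℝ` equal to
`(x₁² − x₂²)/2` on the unit ball and to `‖x‖²/2` outside the ball of radius 2; the origin
is a strict saddle (the Hessian has eigenvalue `−1`), the gradient descent map with step
size `1` sends every point with `‖x‖ > 2` to `0`, and the set of initial points from which
gradient descent with step size `1` converges to a strict saddle of `f` has infinite
Lebesgue measure. -/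
theorem gd_counterexample :
    ∃ f : EuclideanSpace ℝ (Fin 2) → ℝ,
      ContDiff ℝ (⊤ : ℕ∞) f ∧
      (∀ x : EuclideanSpace ℝ (Fin 2), ‖x‖ ≤ 1 → f x = (x 0 ^ 2 - x 1 ^ 2) / 2) ∧
      (∀ x : EuclideanSpace ℝ (Fin 2), 2 ≤ ‖x‖ → f x = ‖x‖ ^ 2 / 2) ∧
      gradient f 0 = 0 ∧
      (∃ v : EuclideanSpace ℝ (Fin 2), v ≠ 0 ∧
        fderiv ℝ (gradient f) 0 v = (-1 : ℝ) • v) ∧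
      (∀ x : EuclideanSpace ℝ (Fin 2), 2 < ‖x‖ → x - gradient f x = 0) ∧
      volume {x₀ : EuclideanSpace ℝ (Fin 2) |
        ∃ p, IsStrictSaddle f p ∧
          Tendsto (fun t => (fun x => x - gradient f x)^[t] x₀) atTop (𝓝 p)} = ⊤ := by
  have hgout : ∀ x : E2, 2 < ‖x‖ → x - gradient myf x = 0 := by
    intro x hx; rw [grad_outer x hx]; simp
  refine ⟨myf, myf_smooth, ?_, myf_outer, grad_zero, ⟨E₁, E₁_ne, eigen⟩, hgout, ?_⟩
  · intro x hx; rw [myf_inner x hx, norm_sq_eq']; ring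
  · have hsaddle : IsStrictSaddle myf 0 := ⟨grad_zero, -1, by norm_num, E₁, E₁_ne, eigen⟩
    have hfix : (fun x : E2 => x - gradient myf x) 0 = 0 := by simp [grad_zero]
    have hsub : {x : E2 | 2 < ‖x‖} ⊆ {x₀ : E2 |
        ∃ p, IsStrictSaddle myf p ∧
          Tendsto (fun t => (fun x => x - gradient myf x)^[t] x₀) atTop (𝓝 p)} := by
      intro x₀ hx₀
      refine ⟨0, hsaddle, ?_⟩
      have hiter : ∀ t : ℕ, 1 ≤ t → (fun x : E2 => x - gradient myf x)^[t] x₀ = 0 := by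
        intro t ht
        obtain ⟨n, rfl⟩ := Nat.exists_eq_add_of_le ht
        rw [add_comm, Function.iterate_succ_apply]
        rw [show x₀ - gradient myf x₀ = 0 from hgout x₀ hx₀]
        exact Function.iterate_fixed (f := fun x : E2 => x - gradient myf x)
          (x := 0) (by simpa using hfix) n
      exact tendsto_const_nhds.congr'
        (eventually_atTop.2 ⟨1, fun t ht => (hiter t ht).symm⟩)
    have huniv : volume (Set.univ : Set E2) = ⊤ :=
      MeasureTheory.measure_univ_of_isAddLeftInvariant volume
    have hcb : volume (Metric.closedBall (0:E2) 2) < ⊤ :=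
      (isCompact_closedBall _ _).measure_lt_top
    have hA : volume {x : E2 | 2 < ‖x‖} = ⊤ := by
      by_contra h
      have hle : volume (Set.univ : Set E2)
          ≤ volume (Metric.closedBall (0:E2) 2) + volume {x : E2 | 2 < ‖x‖} := by
        refine le_trans (measure_mono ?_) (measure_union_le _ _)
        intro x _
        by_cases hx : ‖x‖ ≤ 2
        · exact Or.inl (mem_closedBall_zero_iff.2 hx)
        · exact Or.inr (by simpa using lt_of_not_ge hx)
      rw [huniv] at hle
      exact (lt_irrefl ⊤) (lt_of_le_of_lt hle
        (ENNReal.add_lt_top.2 ⟨hcb, lt_top_iff_ne_top.2 h⟩))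
    exact top_le_iff.1 (hA ▸ measure_mono hsub)
end
end

section
/- (Ponomarev.) Let g : ℝⁿ → ℝⁿ be a C¹ map. Then the following are equivalent: (i) g has the Luzin N⁻¹ property; (ii) the derivative Dg(x) is invertible for Lebesgue-almost all x ∈ ℝⁿ. -/
open MeasureTheory Filter Topology Set

noncomputable section

/-- `g` has the Luzin `N⁻¹` property: preimages of Lebesgue measure zero sets have
Lebesgue measure zero. -/
def LuzinNInv {n : ℕ} (g : EuclideanSpace ℝ (Fin n) → EuclideanSpace ℝ (Fin n)) : Prop :=
  ∀ A : Set (EuclideanSpace ℝ (Fin n)), volume A = 0 → volume (g ⁻¹' A) = 0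

/-- (Ponomarev.) A `C¹` map `g : ℝⁿ → ℝⁿ` has the Luzin `N⁻¹` property if and only if its
derivative `Dg(x)` is invertible for Lebesgue-almost all `x`. -/
theorem luzin_iff_ae_invertible_deriv {n : ℕ}
    (g : EuclideanSpace ℝ (Fin n) → EuclideanSpace ℝ (Fin n))
    (hg : ContDiff ℝ 1 g) :
    LuzinNInv g ↔
      ∀ᵐ x ∂(volume : Measure (EuclideanSpace ℝ (Fin n))),
        Function.Bijective (fderiv ℝ g x) := by
  have hdiff : Differentiable ℝ g := hg.differentiable one_ne_zero
  have hcont : Continuous fun x : EuclideanSpace ℝ (Fin n) => (fderiv ℝ g x).det :=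
    ContinuousLinearMap.continuous_det.comp (hg.continuous_fderiv one_ne_zero)
  -- bijectivity of the derivative is equivalent to nonvanishing of its determinant
  have hbij : ∀ x : EuclideanSpace ℝ (Fin n), Function.Bijective (fderiv ℝ g x) ↔ (fderiv ℝ g x).det ≠ 0 := by
    intro x
    constructor
    · intro h hdet
      have h1 : IsUnit (LinearMap.det
          ((LinearEquiv.ofBijective (fderiv ℝ g x).toLinearMap h : EuclideanSpace ℝ (Fin n) ≃ₗ[ℝ] EuclideanSpace ℝ (Fin n)) : EuclideanSpace ℝ (Fin n) →ₗ[ℝ] EuclideanSpace ℝ (Fin n))) :=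
        LinearEquiv.isUnit_det' _
      have h2 : ((LinearEquiv.ofBijective (fderiv ℝ g x).toLinearMap h : EuclideanSpace ℝ (Fin n) ≃ₗ[ℝ] EuclideanSpace ℝ (Fin n)) : EuclideanSpace ℝ (Fin n) →ₗ[ℝ] EuclideanSpace ℝ (Fin n))
          = (fderiv ℝ g x).toLinearMap := by ext y; rfl
      rw [h2] at h1
      exact h1.ne_zero hdet
    · intro hdet
      have h2 : ⇑((fderiv ℝ g x).toContinuousLinearEquivOfDetNeZero hdet) = ⇑(fderiv ℝ g x) := by
        rw [← ContinuousLinearEquiv.coe_coe,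
          ContinuousLinearMap.coe_toContinuousLinearEquivOfDetNeZero]
      rw [← h2]
      exact ((fderiv ℝ g x).toContinuousLinearEquivOfDetNeZero hdet).bijective
  constructor
  · -- Luzin N⁻¹ implies a.e. invertibility
    intro hL
    set s : Set (EuclideanSpace ℝ (Fin n)) := {x | (fderiv ℝ g x).det = 0} with hs_def
    have hs : MeasurableSet s := (isClosed_singleton.preimage hcont).measurableSet
    have himg : volume (g '' s) = 0 := by
      refine le_antisymm ?_ zero_le
      calc volume (g '' s)
          ≤ ∫⁻ x in s, ENNReal.ofReal |(fderiv ℝ g x).det| ∂volume :=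
            addHaar_image_le_lintegral_abs_det_fderiv volume hs
              (fun x _ => (hdiff x).hasFDerivAt.hasFDerivWithinAt)
        _ = ∫⁻ x in s, 0 ∂volume := by
            refine setLIntegral_congr_fun hs (fun x hx => ?_)
            have hx0 : (fderiv ℝ g x).det = 0 := hx
            simp [hx0]
        _ = 0 := lintegral_zero
    have hsnull : volume s = 0 :=
      measure_mono_null (subset_preimage_image g s) (hL _ himg)
    rw [ae_iff]
    refine measure_mono_null (fun x hx => ?_) hsnull
    simp only [Set.mem_setOf_eq] at hx ⊢
    by_contra hdet
    exact hx ((hbij x).mpr hdet)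
  · -- a.e. invertibility implies Luzin N⁻¹
    intro hae A hA
    -- replace A with a measurable null superset
    set A' := toMeasurable volume A with hA'_def
    have hA'meas : MeasurableSet A' := measurableSet_toMeasurable _ _
    have hA'null : volume A' = 0 := by rwa [measure_toMeasurable]
    suffices h : volume (g ⁻¹' A') = 0 from
      measure_mono_null (Set.preimage_mono (subset_toMeasurable _ _)) h
    set t : Set (EuclideanSpace ℝ (Fin n)) := {x | (fderiv ℝ g x).det ≠ 0} with ht_def
    have ht_open : IsOpen t := isOpen_compl_singleton.preimage hcont
    have htc_null : volume tᶜ = 0 := by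
      have : ∀ᵐ x ∂(volume : Measure (EuclideanSpace ℝ (Fin n))), (fderiv ℝ g x).det ≠ 0 := by
        filter_upwards [hae] with x hx using (hbij x).mp hx
      rw [ae_iff] at this
      convert this using 2
      rfl
    -- local injectivity on t
    have key : ∀ x : t, ∃ U : Set (EuclideanSpace ℝ (Fin n)), IsOpen U ∧ (x : EuclideanSpace ℝ (Fin n)) ∈ U ∧ U ⊆ t ∧ Set.InjOn g U := by
      rintro ⟨x, hx⟩
      have hstrict : HasStrictFDerivAt g (fderiv ℝ g x) x :=
        hg.contDiffAt.hasStrictFDerivAt one_ne_zero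
      have hstrict' : HasStrictFDerivAt g
          ((((fderiv ℝ g x).toContinuousLinearEquivOfDetNeZero hx :
              EuclideanSpace ℝ (Fin n) ≃L[ℝ] EuclideanSpace ℝ (Fin n))) :
            EuclideanSpace ℝ (Fin n) →L[ℝ] EuclideanSpace ℝ (Fin n)) x := by
        rw [ContinuousLinearMap.coe_toContinuousLinearEquivOfDetNeZero]
        exact hstrict
      set P := hstrict'.toOpenPartialHomeomorph g with hP
      have hinj : Set.InjOn g P.source := by
        have := P.injOn
        rwa [hP, HasStrictFDerivAt.toOpenPartialHomeomorph_coe] at this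
      exact ⟨P.source ∩ t, P.open_source.inter ht_open,
        ⟨hstrict'.mem_toOpenPartialHomeomorph_source, hx⟩, inter_subset_right,
        hinj.mono inter_subset_left⟩
    choose U hUopen hUmem hUsub hUinj using key
    obtain ⟨T, hTcount, hTcover⟩ := TopologicalSpace.isOpen_iUnion_countable U hUopen
    have ht_cover : t ⊆ ⋃ i ∈ T, U i := by
      intro x hx
      rw [hTcover]
      exact Set.mem_iUnion.2 ⟨⟨x, hx⟩, hUmem ⟨x, hx⟩⟩
    -- each piece has measure zero
    have hpiece : ∀ i : t, volume (g ⁻¹' A' ∩ U i) = 0 := by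
      intro i
      set S := g ⁻¹' A' ∩ U i with hS_def
      have hSmeas : MeasurableSet S :=
        (hA'meas.preimage hg.continuous.measurable).inter (hUopen i).measurableSet
      have heq : (∫⁻ x in S, ENNReal.ofReal |(fderiv ℝ g x).det| ∂volume) = volume (g '' S) :=
        lintegral_abs_det_fderiv_eq_addHaar_image volume hSmeas
          (fun x _ => (hdiff x).hasFDerivAt.hasFDerivWithinAt)
          ((hUinj i).mono inter_subset_right)
      have himg0 : volume (g '' S) = 0 :=
        measure_mono_null (fun y hy => by
          rcases hy with ⟨x, hx, rfl⟩
          exact hx.1) hA'null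
      rw [himg0] at heq
      -- positive integrand forces the set to be null
      have hmeasf : Measurable fun x : EuclideanSpace ℝ (Fin n) => ENNReal.ofReal |(fderiv ℝ g x).det| :=
        ((hcont.abs).measurable).ennreal_ofReal
      rw [lintegral_eq_zero_iff hmeasf] at heq
      have h0 : (volume.restrict S) {x | ENNReal.ofReal |(fderiv ℝ g x).det| ≠ 0} = 0 := by
        have h1 : ∀ᵐ x ∂(volume.restrict S), ENNReal.ofReal |(fderiv ℝ g x).det| = 0 := heq
        rw [ae_iff] at h1
        simpa using h1
      have hSsub : S ⊆ {x | ENNReal.ofReal |(fderiv ℝ g x).det| ≠ 0} := by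
        intro x hx
        have hxt : x ∈ t := hUsub i hx.2
        simp only [Set.mem_setOf_eq, ne_eq, ENNReal.ofReal_eq_zero, not_le]
        exact abs_pos.2 hxt
      refine le_antisymm ?_ zero_le
      calc volume S = (volume.restrict S) S := (Measure.restrict_apply_self _ _).symm
        _ ≤ (volume.restrict S) {x | ENNReal.ofReal |(fderiv ℝ g x).det| ≠ 0} :=
            measure_mono hSsub
        _ = 0 := h0
    -- assemble
    have hsub : g ⁻¹' A' ⊆ tᶜ ∪ ⋃ i ∈ T, (g ⁻¹' A' ∩ U i) := by
      intro x hx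
      by_cases hxt : x ∈ t
      · rcases Set.mem_iUnion₂.1 (ht_cover hxt) with ⟨i, hi, hxi⟩
        exact Or.inr (Set.mem_iUnion₂.2 ⟨i, hi, hx, hxi⟩)
      · exact Or.inl hxt
    refine measure_mono_null hsub (measure_union_null htc_null ?_)
    exact (measure_biUnion_null_iff hTcount).2 fun i _ => hpiece i
end
end

section
/- Let f : ℝⁿ → ℝ be C². Then for almost all α ∈ ℝ (with respect to Lebesgue measure on ℝ), the set { x ∈ ℝⁿ : the linear map I − α∇²f(x) is not invertible } has Lebesgue measure zero in ℝⁿ. -/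
open MeasureTheory Filter Topology

noncomputable section

lemma finite_det_zero_set {n : ℕ} (A : EuclideanSpace ℝ (Fin n) →L[ℝ] EuclideanSpace ℝ (Fin n)) :
    {α : ℝ | ((1 : EuclideanSpace ℝ (Fin n) →L[ℝ] EuclideanSpace ℝ (Fin n)) - α • A).det
      = 0}.Finite := by
  classical
  let b : Module.Basis (Fin n) ℝ (EuclideanSpace ℝ (Fin n)) :=
    (EuclideanSpace.basisFun (Fin n) ℝ).toBasis
  let M : Matrix (Fin n) (Fin n) ℝ := LinearMap.toMatrix b b (A : _ →ₗ[ℝ] _)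
  let p : Polynomial ℝ :=
    ((1 : Matrix (Fin n) (Fin n) (Polynomial ℝ))
      - (Polynomial.X : Polynomial ℝ) • M.map Polynomial.C).det
  have key : ∀ α : ℝ, Polynomial.eval α p
      = ((1 : EuclideanSpace ℝ (Fin n) →L[ℝ] EuclideanSpace ℝ (Fin n)) - α • A).det := by
    intro α
    have h1 : Polynomial.eval α p
        = (((1 : Matrix (Fin n) (Fin n) (Polynomial ℝ))
            - (Polynomial.X : Polynomial ℝ) • M.map Polynomial.C).map
              (Polynomial.evalRingHom α)).det := by
      simpa using RingHom.map_det (Polynomial.evalRingHom α)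
        ((1 : Matrix (Fin n) (Fin n) (Polynomial ℝ))
          - (Polynomial.X : Polynomial ℝ) • M.map Polynomial.C)
    have h2 : (((1 : Matrix (Fin n) (Fin n) (Polynomial ℝ))
            - (Polynomial.X : Polynomial ℝ) • M.map Polynomial.C).map
              (Polynomial.evalRingHom α))
        = (1 : Matrix (Fin n) (Fin n) ℝ) - α • M := by
      ext i j
      by_cases hij : i = j <;>
        simp only [Matrix.map_apply, Matrix.sub_apply, Matrix.smul_apply, Matrix.one_apply,
          hij, if_true, if_false, smul_eq_mul, Polynomial.coe_evalRingHom, Polynomial.eval_sub,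
          Polynomial.eval_one, Polynomial.eval_zero, Polynomial.eval_mul, Polynomial.eval_X,
          Polynomial.eval_C]
    have h3 : ((1 : Matrix (Fin n) (Fin n) ℝ) - α • M).det
        = LinearMap.det ((1 : EuclideanSpace ℝ (Fin n) →ₗ[ℝ] EuclideanSpace ℝ (Fin n))
            - α • (A : _ →ₗ[ℝ] _)) := by
      have : (1 : Matrix (Fin n) (Fin n) ℝ) - α • M
          = LinearMap.toMatrix b b
            ((1 : EuclideanSpace ℝ (Fin n) →ₗ[ℝ] EuclideanSpace ℝ (Fin n))
              - α • (A : _ →ₗ[ℝ] _)) := by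
        simp [M, map_sub, _root_.map_smul, LinearMap.toMatrix_one]
      rw [this, LinearMap.det_toMatrix]
    have h4 : ((1 : EuclideanSpace ℝ (Fin n) →L[ℝ] EuclideanSpace ℝ (Fin n)) - α • A).det
        = LinearMap.det ((1 : EuclideanSpace ℝ (Fin n) →ₗ[ℝ] EuclideanSpace ℝ (Fin n))
            - α • (A : _ →ₗ[ℝ] _)) := rfl
    rw [h1, h2, h3, h4]
  have hp : p ≠ 0 := by
    intro h
    have h0 : Polynomial.eval 0 p = 1 := by
      rw [key 0]
      simp [ContinuousLinearMap.det, ContinuousLinearMap.one_def]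
    rw [h] at h0
    simp at h0
  have hsub : {α : ℝ | ((1 : EuclideanSpace ℝ (Fin n) →L[ℝ] EuclideanSpace ℝ (Fin n))
        - α • A).det = 0} ⊆ {α : ℝ | p.IsRoot α} := by
    intro α hα
    simp only [Set.mem_setOf_eq, Polynomial.IsRoot, key α]
    exact hα
  exact (Polynomial.finite_setOf_isRoot hp).subset hsub

lemma bijective_iff_det_ne_zero {n : ℕ}
    (A : EuclideanSpace ℝ (Fin n) →L[ℝ] EuclideanSpace ℝ (Fin n)) :
    Function.Bijective A ↔ A.det ≠ 0 := by
  constructor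
  · intro hA h0
    have := LinearMap.bot_lt_ker_of_det_eq_zero
      (f := (A : EuclideanSpace ℝ (Fin n) →ₗ[ℝ] EuclideanSpace ℝ (Fin n))) h0
    rw [bot_lt_iff_ne_bot, ne_eq, LinearMap.ker_eq_bot] at this
    exact this hA.injective
  · intro h0
    have hb := (LinearMap.equivOfDetNeZero
      (A : EuclideanSpace ℝ (Fin n) →ₗ[ℝ] EuclideanSpace ℝ (Fin n)) h0).bijective
    have hc : ⇑(LinearMap.equivOfDetNeZero
        (A : EuclideanSpace ℝ (Fin n) →ₗ[ℝ] EuclideanSpace ℝ (Fin n)) h0) = ⇑A := by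
      ext v
      simp [LinearMap.equivOfDetNeZero, LinearEquiv.ofIsUnitDet_apply]
    rwa [hc] at hb

/-- For a `C²` function `f : ℝⁿ → ℝ` and almost all `α ∈ ℝ`, the set of points `x` where
`I − α∇²f(x)` (with `∇²f(x)` the Hessian, i.e. the derivative of the gradient) is not
invertible has Lebesgue measure zero. -/
theorem ae_stepsize_hessian_shift_invertible {n : ℕ}
    (f : EuclideanSpace ℝ (Fin n) → ℝ) (hf : ContDiff ℝ 2 f) :
    ∀ᵐ α ∂(volume : Measure ℝ),
      volume {x : EuclideanSpace ℝ (Fin n) |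
        ¬ Function.Bijective (fun v : EuclideanSpace ℝ (Fin n) =>
            v - α • fderiv ℝ (gradient f) x v)} = 0 := by
  set H : EuclideanSpace ℝ (Fin n) →
      (EuclideanSpace ℝ (Fin n) →L[ℝ] EuclideanSpace ℝ (Fin n)) :=
    fderiv ℝ (gradient f) with hH
  -- continuity of the Hessian
  have hgrad : ContDiff ℝ 1 (gradient f) := by
    have h1 : ContDiff ℝ 1 (fderiv ℝ f) := hf.fderiv_right (by norm_num)
    have heq : gradient f = fun x =>
        (InnerProductSpace.toDual ℝ (EuclideanSpace ℝ (Fin n))).symm (fderiv ℝ f x) := rfl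
    rw [heq]
    exact (InnerProductSpace.toDual ℝ (EuclideanSpace ℝ (Fin n))).symm.contDiff.comp h1
  have hHcont : Continuous H := hgrad.continuous_fderiv one_ne_zero
  -- the bad set in the product space
  set T : Set (ℝ × EuclideanSpace ℝ (Fin n)) :=
    {q | ((1 : EuclideanSpace ℝ (Fin n) →L[ℝ] EuclideanSpace ℝ (Fin n))
      - q.1 • H q.2).det = 0} with hT
  have hGcont : Continuous fun q : ℝ × EuclideanSpace ℝ (Fin n) =>
      ((1 : EuclideanSpace ℝ (Fin n) →L[ℝ] EuclideanSpace ℝ (Fin n)) - q.1 • H q.2).det :=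
    ContinuousLinearMap.continuous_det.comp
      (continuous_const.sub (continuous_fst.smul (hHcont.comp continuous_snd)))
  have hTmeas : MeasurableSet T := hGcont.measurable (measurableSet_singleton 0)
  have hTswap : MeasurableSet (Prod.swap ⁻¹' T : Set (EuclideanSpace ℝ (Fin n) × ℝ)) :=
    hTmeas.preimage measurable_swap
  have hprod : (volume : Measure ℝ).prod (volume : Measure (EuclideanSpace ℝ (Fin n))) T = 0 := by
    have hswap : (volume : Measure ℝ).prod (volume : Measure (EuclideanSpace ℝ (Fin n))) T
        = (volume : Measure (EuclideanSpace ℝ (Fin n))).prod (volume : Measure ℝ)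
            (Prod.swap ⁻¹' T) := by
      rw [← Measure.prod_swap, Measure.map_apply measurable_swap hTmeas]
    rw [hswap, Measure.prod_apply hTswap]
    have hsec : ∀ x : EuclideanSpace ℝ (Fin n),
        (volume : Measure ℝ) (Prod.mk x ⁻¹' (Prod.swap ⁻¹' T)) = 0 := by
      intro x
      have hpre : (Prod.mk x ⁻¹' (Prod.swap ⁻¹' T))
          = {α : ℝ | ((1 : EuclideanSpace ℝ (Fin n) →L[ℝ] EuclideanSpace ℝ (Fin n))
              - α • H x).det = 0} := rfl
      rw [hpre]
      exact (finite_det_zero_set (H x)).countable.measure_zero _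
    simp [hsec]
  have hae := (Measure.measure_prod_null hTmeas).mp hprod
  filter_upwards [hae] with α hα
  have hset : {x : EuclideanSpace ℝ (Fin n) |
      ¬ Function.Bijective (fun v : EuclideanSpace ℝ (Fin n) => v - α • H x v)}
      = Prod.mk α ⁻¹' T := by
    ext x
    have hfun : (fun v : EuclideanSpace ℝ (Fin n) => v - α • H x v)
        = ⇑((1 : EuclideanSpace ℝ (Fin n) →L[ℝ] EuclideanSpace ℝ (Fin n)) - α • H x) := by
      ext v; simp
    simp only [Set.mem_setOf_eq, Set.mem_preimage, hT, hfun]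
    rw [bijective_iff_det_ne_zero]
    tauto
  rw [hset]
  simpa using hα
end
end

section
/- Let f : ℝⁿ → ℝ be C². Then for almost all α ∈ ℝ (with respect to Lebesgue measure on ℝ), the gradient descent iteration map g_α : ℝⁿ → ℝⁿ defined by g_α(x) = x − α∇f(x) has the Luzin N⁻¹ property. -/
open MeasureTheory Filter Topology

noncomputable section

variable {n : ℕ}

local notation "E" => EuclideanSpace ℝ (Fin n)

-- finite zero set of α ↦ det (1 - α • M)
lemma finite_det_zero (M : EuclideanSpace ℝ (Fin n) →L[ℝ] EuclideanSpace ℝ (Fin n)) :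
    Set.Finite {α : ℝ | ((1 : E →L[ℝ] E) - α • M).det = 0} := by
  classical
  let b := Module.finBasis ℝ E
  let A := LinearMap.toMatrix b b (M : E →ₗ[ℝ] E)
  let P : Matrix (Fin (Module.finrank ℝ E)) (Fin (Module.finrank ℝ E)) (Polynomial ℝ) := 1 - (Polynomial.X : Polynomial ℝ) • A.map Polynomial.C
  have hev : ∀ α : ℝ, Polynomial.eval α P.det = ((1 : E →L[ℝ] E) - α • M).det := by
    intro α
    have h1 : Polynomial.eval α P.det = (P.map (Polynomial.evalRingHom α)).det := by
      exact (RingHom.map_det (Polynomial.evalRingHom α) P)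
    have h2 : P.map (Polynomial.evalRingHom α) = (1 : Matrix _ _ ℝ) - α • A := by
      ext i j
      simp [P, Matrix.map_apply, Matrix.one_apply, Matrix.sub_apply, A]
      split_ifs <;> simp [mul_comm]
    have h3 : ((1 : E →L[ℝ] E) - α • M).det
        = ((1 : Matrix _ _ ℝ) - α • A).det := by
      rw [ContinuousLinearMap.det]
      rw [← LinearMap.det_toMatrix b]
      have : ((1 - α • M : E →L[ℝ] E) : E →ₗ[ℝ] E) = 1 - α • (M : E →ₗ[ℝ] E) := by
        ext v; simp
      rw [this]
      simp [LinearMap.toMatrix_one, A]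
    rw [h1, h2, h3]
  have hP : P.det ≠ 0 := by
    intro h
    have := hev 0
    rw [h] at this
    simp [ContinuousLinearMap.det, ContinuousLinearMap.one_def] at this
  have : {α : ℝ | ((1 : E →L[ℝ] E) - α • M).det = 0} = {α | Polynomial.IsRoot P.det α} := by
    ext α; simp [Polynomial.IsRoot, hev α]
  rw [this]
  exact Polynomial.finite_setOf_isRoot hP

lemma luzin_of_det_ne_zero (g : E → E) (hg : ContDiff ℝ 1 g)
    (hZ : volume {x : E | (fderiv ℝ g x).det = 0} = 0) : LuzinNInv g := by
  intro A hA
  set U : Set E := {x : E | (fderiv ℝ g x).det ≠ 0} with hU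
  have key : ∀ x ∈ U, ∃ V ∈ 𝓝 x, volume (g ⁻¹' A ∩ V) = 0 := by
    intro x hx
    have hdet : (fderiv ℝ g x).det ≠ 0 := hx
    set f' := (fderiv ℝ g x).toContinuousLinearEquivOfDetNeZero hdet with hf'def
    have hf' : HasFDerivAt g (f' : E →L[ℝ] E) x := by
      rw [hf'def, ContinuousLinearMap.coe_toContinuousLinearEquivOfDetNeZero]
      exact (hg.differentiable one_ne_zero x).hasFDerivAt
    have hca : ContDiffAt ℝ 1 g x := hg.contDiffAt
    set h := hca.localInverse hf' one_ne_zero with hhdef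
    have hinv : ContDiffAt ℝ 1 h (g x) := hca.to_localInverse hf' one_ne_zero
    obtain ⟨W, hWnhds, hWdiff⟩ : ∃ W ∈ 𝓝 (g x), ContDiffOn ℝ 1 h W :=
      hinv.contDiffOn le_rfl (by simp)
    have hev : ∀ᶠ z in 𝓝 x, h (g z) = z :=
      (hca.hasStrictFDerivAt' hf' one_ne_zero).eventually_left_inverse
    have hgz : ∀ᶠ z in 𝓝 x, g z ∈ W :=
      hg.continuous.continuousAt.preimage_mem_nhds hWnhds
    refine ⟨{z | h (g z) = z ∧ g z ∈ W}, hev.and hgz, ?_⟩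
    have hsub : g ⁻¹' A ∩ {z | h (g z) = z ∧ g z ∈ W} ⊆ h '' (A ∩ W) := by
      rintro z ⟨hzA, hzh, hzW⟩
      exact ⟨g z, ⟨hzA, hzW⟩, hzh⟩
    refine measure_mono_null hsub ?_
    exact MeasureTheory.addHaar_image_eq_zero_of_differentiableOn_of_addHaar_eq_zero (μ := volume)
      ((hWdiff.differentiableOn one_ne_zero).mono Set.inter_subset_right)
      (measure_mono_null Set.inter_subset_left hA)
  choose! V hVnhds hVnull using key
  obtain ⟨t, hts, htc, htcov⟩ : ∃ t ⊆ U, t.Countable ∧ U ⊆ ⋃ x ∈ t, V x :=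
    TopologicalSpace.countable_cover_nhdsWithin fun x hx =>
      nhdsWithin_le_nhds (hVnhds x hx)
  have hsplit : g ⁻¹' A ⊆ {x : E | (fderiv ℝ g x).det = 0} ∪ ⋃ x ∈ t, g ⁻¹' A ∩ V x := by
    intro z hz
    by_cases hzU : (fderiv ℝ g z).det = 0
    · exact Or.inl hzU
    · rcases Set.mem_iUnion₂.1 (htcov hzU) with ⟨x, hxt, hzV⟩
      exact Or.inr (Set.mem_iUnion₂.2 ⟨x, hxt, hz, hzV⟩)
  refine measure_mono_null hsplit (measure_union_null hZ ?_)
  exact (measure_biUnion_null_iff htc).2 fun x hxt => hVnull x (hts hxt)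

/-- For a `C²` function `f : ℝⁿ → ℝ` and almost all `α ∈ ℝ`, the gradient descent
iteration map `x ↦ x − α∇f(x)` has the Luzin `N⁻¹` property. -/
theorem ae_stepsize_gd_luzin {n : ℕ}
    (f : EuclideanSpace ℝ (Fin n) → ℝ) (hf : ContDiff ℝ 2 f) :
    ∀ᵐ α ∂(volume : Measure ℝ),
      LuzinNInv (fun x => x - α • gradient f x) := by
  have hgrad : ContDiff ℝ 1 (gradient f) := by
    have h1 : ContDiff ℝ 1 (fderiv ℝ f) := hf.fderiv_right (by norm_num)
    have h2 : gradient f = fun x => (InnerProductSpace.toDual ℝ (EuclideanSpace ℝ (Fin n))).symm (fderiv ℝ f x) := rfl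
    rw [h2]
    exact (InnerProductSpace.toDual ℝ (EuclideanSpace ℝ (Fin n))).symm.contDiff.comp h1
  set D : EuclideanSpace ℝ (Fin n) → EuclideanSpace ℝ (Fin n) →L[ℝ] EuclideanSpace ℝ (Fin n) := fderiv ℝ (gradient f) with hD
  have hDcont : Continuous D := hgrad.continuous_fderiv one_ne_zero
  have hfd : ∀ (α : ℝ) (x : EuclideanSpace ℝ (Fin n)),
      fderiv ℝ (fun y => y - α • gradient f y) x = (1 : EuclideanSpace ℝ (Fin n) →L[ℝ] EuclideanSpace ℝ (Fin n)) - α • D x := by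
    intro α x
    have h1 : HasFDerivAt (fun y : EuclideanSpace ℝ (Fin n) => y - α • gradient f y)
        ((1 : EuclideanSpace ℝ (Fin n) →L[ℝ] EuclideanSpace ℝ (Fin n)) - α • D x) x := by
      have := (hasFDerivAt_id x).sub
        (((hgrad.differentiable one_ne_zero x).hasFDerivAt).const_smul α)
      rw [ContinuousLinearMap.one_def]; exact this
    exact h1.fderiv
  set s : Set (ℝ × EuclideanSpace ℝ (Fin n)) := {p | ((1 : EuclideanSpace ℝ (Fin n) →L[ℝ] EuclideanSpace ℝ (Fin n)) - p.1 • D p.2).det = 0} with hs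
  have hmeas : MeasurableSet s := by
    have hc : Continuous fun p : ℝ × EuclideanSpace ℝ (Fin n) => ((1 : EuclideanSpace ℝ (Fin n) →L[ℝ] EuclideanSpace ℝ (Fin n)) - p.1 • D p.2).det :=
      ContinuousLinearMap.continuous_det.comp
        (continuous_const.sub (continuous_fst.smul (hDcont.comp continuous_snd)))
    exact (isClosed_eq hc continuous_const).measurableSet
  have hprod : ((volume : Measure ℝ).prod (volume : Measure (EuclideanSpace ℝ (Fin n)))) s = 0 := by
    have hmeas' : MeasurableSet (Prod.swap ⁻¹' s) := hmeas.preimage measurable_swap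
    have h1 : ((volume : Measure (EuclideanSpace ℝ (Fin n))).prod (volume : Measure ℝ)) (Prod.swap ⁻¹' s) = 0 := by
      rw [MeasureTheory.Measure.measure_prod_null hmeas']
      refine Filter.Eventually.of_forall fun x => ?_
      have h2 : (Prod.mk x ⁻¹' (Prod.swap ⁻¹' s))
          = {α : ℝ | ((1 : EuclideanSpace ℝ (Fin n) →L[ℝ] EuclideanSpace ℝ (Fin n)) - α • D x).det = 0} := rfl
      show volume (Prod.mk x ⁻¹' (Prod.swap ⁻¹' s)) = 0
      rw [h2]
      exact (finite_det_zero (D x)).measure_zero _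
    calc ((volume : Measure ℝ).prod (volume : Measure (EuclideanSpace ℝ (Fin n)))) s
        = (Measure.map Prod.swap ((volume : Measure (EuclideanSpace ℝ (Fin n))).prod (volume : Measure ℝ))) s := by
          rw [MeasureTheory.Measure.prod_swap]
      _ = ((volume : Measure (EuclideanSpace ℝ (Fin n))).prod (volume : Measure ℝ)) (Prod.swap ⁻¹' s) :=
          Measure.map_apply measurable_swap hmeas
      _ = 0 := h1
  have hae := MeasureTheory.Measure.measure_ae_null_of_prod_null hprod
  filter_upwards [hae] with α hα
  have hgc : ContDiff ℝ 1 (fun x : EuclideanSpace ℝ (Fin n) => x - α • gradient f x) := by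
    simpa using contDiff_id.sub (contDiff_const.smul hgrad)
  apply luzin_of_det_ne_zero _ hgc
  have heq : {x : EuclideanSpace ℝ (Fin n) | (fderiv ℝ (fun y => y - α • gradient f y) x).det = 0}
      = Prod.mk α ⁻¹' s := by
    ext x
    simp only [Set.mem_setOf_eq, Set.mem_preimage, hfd α x, hs]
  rw [heq]
  exact hα
end
end

section
/- Let f : ℝⁿ → ℝ be C². Then for almost all step sizes α > 0, gradient descent with constant step size α avoids the strict saddles of f: the set of initial points x₀ ∈ ℝⁿ such that the sequence defined by x_{t+1} = x_t − α∇f(x_t) converges to a strict saddle of f has Lebesgue measure zero. -/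
open MeasureTheory Filter Topology InnerProductSpace

noncomputable section
variable {n : ℕ}
local notation "E" => EuclideanSpace ℝ (Fin n)

theorem gradient_contDiff (f : E → ℝ) (hf : ContDiff ℝ 2 f) : ContDiff ℝ 1 (gradient f) := by
  have h1 : ContDiff ℝ 1 (fderiv ℝ f) := hf.fderiv_right (by norm_num)
  exact ContDiff.comp (LinearIsometryEquiv.contDiff _) h1

theorem hessian_symm (f : E → ℝ) (hf : ContDiff ℝ 2 f) (x u v : E) :
    inner ℝ (fderiv ℝ (gradient f) x u) v = (inner ℝ u (fderiv ℝ (gradient f) x v) : ℝ) := by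
  have h1 : ContDiff ℝ 1 (fderiv ℝ f) := hf.fderiv_right (by norm_num)
  have hfd : DifferentiableAt ℝ (fderiv ℝ f) x := (h1.differentiable one_ne_zero).differentiableAt
  have key : ∀ w z : E, (inner ℝ w (fderiv ℝ (gradient f) x z) : ℝ)
      = fderiv ℝ (fderiv ℝ f) x z w := by
    intro w z
    have e1 : (fun y => (inner ℝ w (gradient f y) : ℝ)) = fun y => fderiv ℝ f y w := by
      funext y
      rw [real_inner_comm]
      exact toDual_symm_apply
    have d1 : HasFDerivAt (fun y => (inner ℝ w (gradient f y) : ℝ))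
        ((innerSL ℝ w).comp (fderiv ℝ (gradient f) x)) x := by
      exact (innerSL ℝ w).hasFDerivAt.comp x
        (((gradient_contDiff f hf).differentiable one_ne_zero) x).hasFDerivAt
    have d2 : HasFDerivAt (fun y => fderiv ℝ f y w)
        ((ContinuousLinearMap.apply ℝ ℝ w).comp (fderiv ℝ (fderiv ℝ f) x)) x :=
      (ContinuousLinearMap.apply ℝ ℝ w).hasFDerivAt.comp x hfd.hasFDerivAt
    have := (e1 ▸ d1).unique d2
    have := congrFun (congrArg (fun (L : (EuclideanSpace ℝ (Fin n)) →L[ℝ] ℝ) => (L : EuclideanSpace ℝ (Fin n) → ℝ)) this) z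
    simpa using this
  have hsymm : IsSymmSndFDerivAt ℝ f x := (hf.contDiffAt).isSymmSndFDerivAt (by norm_num)
  rw [real_inner_comm, key v u, key u v, hsymm u v]


-- projection onto coordinates in s (in EuclideanSpace coordinates)
def coordProj (s : Finset (Fin n)) (x : EuclideanSpace ℝ (Fin n)) : EuclideanSpace ℝ (Fin n) :=
  WithLp.toLp 2 (fun i => if i ∈ s then x i else 0)

lemma coordProj_add (s : Finset (Fin n)) (x y : EuclideanSpace ℝ (Fin n)) :
    coordProj s (x + y) = coordProj s x + coordProj s y := by
  ext i; simp only [coordProj, PiLp.add_apply, PiLp.toLp_apply]; split <;> simp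

lemma coordProj_norm_le (s : Finset (Fin n)) (x : EuclideanSpace ℝ (Fin n)) :
    ‖coordProj s x‖ ≤ ‖x‖ := by
  rw [EuclideanSpace.norm_eq, EuclideanSpace.norm_eq]
  apply Real.sqrt_le_sqrt
  apply Finset.sum_le_sum
  intro i _
  simp only [coordProj, PiLp.toLp_apply]
  split <;> simp [sq_nonneg]

lemma coordProj_add_compl (s : Finset (Fin n)) (x : EuclideanSpace ℝ (Fin n)) :
    coordProj s x + coordProj sᶜ x = x := by
  ext i
  simp only [coordProj, PiLp.add_apply, PiLp.toLp_apply]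
  by_cases h : i ∈ s <;> simp [h, Finset.mem_compl]

lemma norm_le_coordProj (s : Finset (Fin n)) (x : EuclideanSpace ℝ (Fin n)) :
    ‖x‖ ≤ ‖coordProj s x‖ + ‖coordProj sᶜ x‖ := by
  conv_lhs => rw [← coordProj_add_compl s x]
  exact norm_add_le _ _

-- expansion estimate: if |d i| ≥ a on s, then ‖proj_s (d * x)‖ ≥ a ‖proj_s x‖
lemma coordProj_mul_ge (s : Finset (Fin n)) (d : Fin n → ℝ) (a : ℝ) (ha : 0 ≤ a)
    (hd : ∀ i ∈ s, a ≤ |d i|) (x : EuclideanSpace ℝ (Fin n)) :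
    a * ‖coordProj s x‖ ≤ ‖coordProj s (WithLp.toLp 2 (fun i => d i * x i))‖ := by
  rw [EuclideanSpace.norm_eq, EuclideanSpace.norm_eq]
  rw [← Real.sqrt_sq ha, ← Real.sqrt_mul (sq_nonneg a)]
  apply Real.sqrt_le_sqrt
  rw [Finset.mul_sum]
  apply Finset.sum_le_sum
  intro i _
  simp only [coordProj, PiLp.toLp_apply]
  split
  · next h =>
    have h1 := hd i h
    simp only [Real.norm_eq_abs, sq_abs]
    calc a ^ 2 * x i ^ 2 ≤ (d i) ^ 2 * x i ^ 2 := by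
          apply mul_le_mul_of_nonneg_right _ (sq_nonneg _)
          calc a ^ 2 ≤ |d i| ^ 2 := by apply pow_le_pow_left₀ ha h1
            _ = (d i)^2 := sq_abs _
      _ = (d i * x i) ^ 2 := by ring
  · simp

lemma coordProj_mul_le (s : Finset (Fin n)) (d : Fin n → ℝ) (hd : ∀ i ∈ s, |d i| ≤ 1)
    (x : EuclideanSpace ℝ (Fin n)) :
    ‖coordProj s (WithLp.toLp 2 (fun i => d i * x i))‖ ≤ ‖coordProj s x‖ := by
  rw [EuclideanSpace.norm_eq, EuclideanSpace.norm_eq]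
  apply Real.sqrt_le_sqrt
  apply Finset.sum_le_sum
  intro i _
  simp only [coordProj, PiLp.toLp_apply]
  split
  · next h =>
    simp only [Real.norm_eq_abs, sq_abs]
    calc (d i * x i)^2 = (d i)^2 * (x i)^2 := by ring
      _ ≤ 1 * (x i)^2 := by
          apply mul_le_mul_of_nonneg_right _ (sq_nonneg _)
          calc (d i)^2 = |d i|^2 := (sq_abs _).symm
            _ ≤ 1 := by nlinarith [hd i h, abs_nonneg (d i)]
      _ = (x i)^2 := one_mul _
  · simp


lemma null_of_graph (u : Finset (Fin n)) (b : OrthonormalBasis (Fin n) ℝ (EuclideanSpace ℝ (Fin n)))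
    (i₀ : Fin n) (hi₀ : i₀ ∈ u) (S : Set (EuclideanSpace ℝ (Fin n))) (hS : MeasurableSet S)
    (hinj : ∀ x ∈ S, ∀ y ∈ S, (∀ i, i ∉ u → b.repr x i = b.repr y i) → y = x) :
    volume S = 0 := by
  classical
  set P : Fin n → Prop := fun i => i ∉ u with hPdef
  set e1 := (MeasurableEquiv.toLp 2 (Fin n → ℝ)).symm with he1
  set e2 := MeasurableEquiv.piEquivPiSubtypeProd (fun _ : Fin n => ℝ) P with he2
  have m0 : MeasurePreserving (⇑b.repr.symm) volume volume := b.measurePreserving_repr_symm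
  have m1 : MeasurePreserving e1.symm volume volume :=
    (EuclideanSpace.volume_preserving_symm_measurableEquiv_toLp (Fin n)).symm
  have m2 : MeasurePreserving e2.symm volume volume :=
    (volume_preserving_piEquivPiSubtypeProd (fun _ : Fin n => ℝ) P).symm
  set S1 : Set (EuclideanSpace ℝ (Fin n)) := ⇑b.repr.symm ⁻¹' S with hS1
  set S2 : Set (Fin n → ℝ) := ⇑e1.symm ⁻¹' S1 with hS2
  set S3 := ⇑e2.symm ⁻¹' S2 with hS3
  have hS1m : MeasurableSet S1 := b.repr.symm.toHomeomorph.measurable hS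
  have hS2m : MeasurableSet S2 := e1.symm.measurable hS1m
  have hS3m : MeasurableSet S3 := e2.symm.measurable hS2m
  have hv1 : volume S1 = volume S := m0.measure_preimage hS.nullMeasurableSet
  have hv2 : volume S2 = volume S1 := m1.measure_preimage hS1m.nullMeasurableSet
  have hv3 : volume S3 = volume S2 := m2.measure_preimage hS2m.nullMeasurableSet
  rw [← hv1, ← hv2, ← hv3]
  haveI : Nonempty {i : Fin n // ¬ P i} := ⟨⟨i₀, not_not_intro hi₀⟩⟩
  rw [show (volume : Measure ((∀ i : {i // P i}, ℝ) × (∀ i : {i // ¬ P i}, ℝ)))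
      = (volume : Measure (∀ i : {i // P i}, ℝ)).prod volume from Measure.volume_eq_prod .. ]
  rw [Measure.measure_prod_null hS3m]
  apply ae_of_all
  intro φ
  apply Set.Subsingleton.measure_zero
  intro ψ₁ h1 ψ₂ h2
  simp only [Set.mem_preimage] at h1 h2
  set x := b.repr.symm (e1.symm (e2.symm (φ, ψ₁))) with hx
  set y := b.repr.symm (e1.symm (e2.symm (φ, ψ₂))) with hy
  have hxS : x ∈ S := h1
  have hyS : y ∈ S := h2
  have hcoord : ∀ i, i ∉ u → b.repr x i = b.repr y i := by
    intro i hiu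
    rw [hx, hy, b.repr.apply_symm_apply, b.repr.apply_symm_apply]
    have key : ∀ ψ : (∀ i : {i // ¬ P i}, ℝ), e1.symm (e2.symm (φ, ψ)) i = φ ⟨i, hiu⟩ := by
      intro ψ
      show (e2.symm (φ, ψ) : Fin n → ℝ) i = φ ⟨i, hiu⟩
      rw [he2]
      simp only [MeasurableEquiv.piEquivPiSubtypeProd, Equiv.piEquivPiSubtypeProd,
        MeasurableEquiv.coe_mk, Equiv.coe_fn_symm_mk]
      exact dif_pos hiu
    rw [key ψ₁, key ψ₂]
  have hyx := hinj x hxS y hyS hcoord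
  have heq : ((φ, ψ₂) : (∀ i : {i // P i}, ℝ) × (∀ i : {i // ¬ P i}, ℝ)) = (φ, ψ₁) := by
    have h9 := congrArg (fun z => e2 (e1 (b.repr z))) hyx
    rw [hx, hy] at h9
    simpa using h9
  exact congrArg Prod.snd heq.symm

lemma cone_lemma (g : E → E) (T : E →L[ℝ] E) (b : OrthonormalBasis (Fin n) ℝ E)
    (d : Fin n → ℝ) (u : Finset (Fin n)) (a ε ρ r : ℝ) (hr0 : 0 < r)
    (hρ1 : 1 < ρ) (hεdef : ε = (a-1)/4) (hρdef : ρ = (a+1)/2) (ha1 : 1 < a)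
    (hau : ∀ i ∈ u, a ≤ |d i|) (hcu : ∀ i ∈ uᶜ, |d i| ≤ 1)
    (hrepr : ∀ (w : E), b.repr (T w) = WithLp.toLp 2 (fun i => d i * b.repr w i))
    (p : E)
    (hmvt : ∀ x ∈ Metric.closedBall p r, ∀ y ∈ Metric.closedBall p r,
      ‖g y - g x - T (y - x)‖ ≤ ε * ‖y - x‖)
    (hPle : ∀ (s : Finset (Fin n)) (x : EuclideanSpace ℝ (Fin n)), ‖coordProj s x‖ ≤ ‖x‖)
    (hsplit : ∀ (s : Finset (Fin n)) (x : EuclideanSpace ℝ (Fin n)),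
      ‖x‖ ≤ ‖coordProj s x‖ + ‖coordProj sᶜ x‖)
    (hadd : ∀ (s : Finset (Fin n)) (x y : EuclideanSpace ℝ (Fin n)),
      coordProj s (x + y) = coordProj s x + coordProj s y)
    (hge : ∀ (x : EuclideanSpace ℝ (Fin n)),
      a * ‖coordProj u x‖ ≤ ‖coordProj u (WithLp.toLp 2 (fun i => d i * x i))‖)
    (hle1 : ∀ (x : EuclideanSpace ℝ (Fin n)),
      ‖coordProj uᶜ (WithLp.toLp 2 (fun i => d i * x i))‖ ≤ ‖coordProj uᶜ x‖)
    (x : E) (hx : ∀ t : ℕ, g^[t] x ∈ Metric.closedBall p r)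
    (y : E) (hy : ∀ t : ℕ, g^[t] y ∈ Metric.closedBall p r)
    (hQP : ‖coordProj uᶜ (b.repr (y - x))‖ ≤ ‖coordProj u (b.repr (y - x))‖) :
    y = x := by
  set w : ℕ → E := fun t => g^[t] y - g^[t] x with hwdef
  set P : ℕ → ℝ := fun t => ‖coordProj u (b.repr (w t))‖ with hPdef
  set Q : ℕ → ℝ := fun t => ‖coordProj uᶜ (b.repr (w t))‖ with hQdef
  have hε0 : 0 < ε := by rw [hεdef]; linarith
  have hwt : ∀ t, ‖w t‖ ≤ 2 * r := by
    intro t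
    have h1 := hx t; have h2 := hy t
    rw [Metric.mem_closedBall] at h1 h2
    calc ‖w t‖ = dist (g^[t] y) (g^[t] x) := by rw [dist_eq_norm]
      _ ≤ dist (g^[t] y) p + dist p (g^[t] x) := dist_triangle _ _ _
      _ ≤ r + r := by rw [dist_comm p]; exact add_le_add h2 h1
      _ = 2 * r := by ring
  have hstep : ∀ t, Q t ≤ P t → Q (t+1) ≤ P (t+1) ∧ ρ * P t ≤ P (t+1) := by
    intro t hQPt
    have hnorm : ‖w t‖ = ‖b.repr (w t)‖ := (b.repr.norm_map (w t)).symm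
    have hwle : ‖w t‖ ≤ 2 * P t := by
      calc ‖w t‖ = ‖b.repr (w t)‖ := hnorm
        _ ≤ ‖coordProj u (b.repr (w t))‖ + ‖coordProj uᶜ (b.repr (w t))‖ := hsplit u _
        _ ≤ P t + P t := by exact add_le_add le_rfl hQPt
        _ = 2 * P t := by ring
    set e : E := w (t+1) - T (w t) with hedef
    have hwsucc : w (t+1) = g (g^[t] y) - g (g^[t] x) := by
      rw [hwdef]; simp [Function.iterate_succ_apply']
    have he : ‖e‖ ≤ ε * ‖w t‖ := by
      rw [hedef, hwsucc]
      exact hmvt _ (hx t) _ (hy t)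
    have he2 : ‖e‖ ≤ 2 * ε * P t := by
      calc ‖e‖ ≤ ε * ‖w t‖ := he
        _ ≤ ε * (2 * P t) := by
            apply mul_le_mul_of_nonneg_left hwle (le_of_lt hε0)
        _ = 2 * ε * P t := by ring
    have hre : ‖b.repr e‖ = ‖e‖ := b.repr.norm_map e
    have hdecomp : b.repr (w (t+1)) = b.repr (T (w t)) + b.repr e := by
      have : w (t+1) = T (w t) + e := by rw [hedef]; abel
      rw [this, map_add]
    have hgeT : a * ‖coordProj u (b.repr (w t))‖ ≤ ‖coordProj u (b.repr (T (w t)))‖ := by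
      rw [hrepr]; exact hge _
    have hle1T : ‖coordProj uᶜ (b.repr (T (w t)))‖ ≤ ‖coordProj uᶜ (b.repr (w t))‖ := by
      rw [hrepr]; exact hle1 _
    have hP1 : ρ * P t ≤ P (t+1) := by
      have h1 : a * P t - ‖e‖ ≤ P (t+1) := by
        calc a * P t - ‖e‖
            ≤ ‖coordProj u (b.repr (T (w t)))‖ - ‖coordProj u (b.repr e)‖ := by
              apply sub_le_sub hgeT
              calc ‖coordProj u (b.repr e)‖ ≤ ‖b.repr e‖ := hPle u _
                _ = ‖e‖ := hre
          _ ≤ ‖coordProj u (b.repr (T (w t))) + coordProj u (b.repr e)‖ := by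
              have h9 := norm_le_add_norm_add (coordProj u (b.repr (T (w t)))) (coordProj u (b.repr e))
              linarith
          _ = P (t+1) := by
              show _ = ‖coordProj u (b.repr (w (t+1)))‖
              rw [hdecomp, hadd]
      have : ρ * P t ≤ a * P t - ‖e‖ := by
        have h2 : ‖e‖ ≤ 2 * ε * P t := he2
        have hP0 : 0 ≤ P t := norm_nonneg _
        nlinarith [hεdef, hρdef]
      linarith
    refine ⟨?_, hP1⟩
    have hQ1 : Q (t+1) ≤ ρ * P t := by
      calc Q (t+1) = ‖coordProj uᶜ (b.repr (T (w t))) + coordProj uᶜ (b.repr e)‖ := by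
            show ‖coordProj uᶜ (b.repr (w (t+1)))‖ = _
            rw [hdecomp, hadd]
        _ ≤ ‖coordProj uᶜ (b.repr (T (w t)))‖ + ‖coordProj uᶜ (b.repr e)‖ :=
            norm_add_le _ _
        _ ≤ ‖coordProj uᶜ (b.repr (w t))‖ + ‖e‖ := by
            apply add_le_add hle1T
            calc ‖coordProj uᶜ (b.repr e)‖ ≤ ‖b.repr e‖ := hPle uᶜ _
              _ = ‖e‖ := hre
        _ ≤ P t + 2 * ε * P t := add_le_add hQPt he2
        _ = (1 + 2*ε) * P t := by ring
        _ = ρ * P t := by rw [hεdef, hρdef]; ring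
    linarith
  have hind : ∀ t, Q t ≤ P t ∧ ρ ^ t * P 0 ≤ P t := by
    intro t
    induction t with
    | zero => exact ⟨hQP, by simp⟩
    | succ k ih =>
      obtain ⟨ih1, ih2⟩ := ih
      obtain ⟨h1, h2⟩ := hstep k ih1
      refine ⟨h1, ?_⟩
      calc ρ ^ (k+1) * P 0 = ρ * (ρ ^ k * P 0) := by ring
        _ ≤ ρ * P k := by
            apply mul_le_mul_of_nonneg_left ih2 (by linarith)
        _ ≤ P (k+1) := h2
  have hP00 : P 0 = 0 := by
    by_contra h
    have hP0pos : 0 < P 0 := lt_of_le_of_ne (norm_nonneg _) (Ne.symm h)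
    obtain ⟨t, ht⟩ := pow_unbounded_of_one_lt (2 * r / P 0) hρ1
    have h1 : ρ ^ t * P 0 ≤ P t := (hind t).2
    have h2 : P t ≤ ‖w t‖ := by
      rw [hPdef]
      calc ‖coordProj u (b.repr (w t))‖ ≤ ‖b.repr (w t)‖ := hPle u _
        _ = ‖w t‖ := b.repr.norm_map _
    have h3 : ρ ^ t * P 0 ≤ 2 * r := le_trans h1 (le_trans h2 (hwt t))
    have : 2 * r / P 0 * P 0 < ρ ^ t * P 0 := by
      apply mul_lt_mul_of_pos_right ht hP0pos
    rw [div_mul_cancel₀ _ (ne_of_gt hP0pos)] at this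
    linarith
  have hw0 : w 0 = 0 := by
    have hQ0 : Q 0 = 0 := le_antisymm (hP00 ▸ (hind 0).1) (norm_nonneg _)
    have : ‖w 0‖ ≤ 0 := by
      calc ‖w 0‖ = ‖b.repr (w 0)‖ := (b.repr.norm_map _).symm
        _ ≤ ‖coordProj u (b.repr (w 0))‖ + ‖coordProj uᶜ (b.repr (w 0))‖ := hsplit u _
        _ = P 0 + Q 0 := rfl
        _ = 0 := by rw [hP00, hQ0]; ring
    simpa using le_antisymm this (norm_nonneg _)
  have : y - x = 0 := by simpa [hwdef] using hw0
  exact sub_eq_zero.mp this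

theorem local_null (f : E → ℝ) (hf : ContDiff ℝ 2 f) (α : ℝ) (hα : 0 < α)
    (p : E) (hp : IsStrictSaddle f p) :
    ∃ r > 0, volume {x : E | ∀ t : ℕ,
      (fun y => y - α • gradient f y)^[t] x ∈ Metric.closedBall p r} = 0 := by
  classical
  set g : E → E := fun y => y - α • gradient f y with hgdef
  have hG : ContDiff ℝ 1 (gradient f) := gradient_contDiff f hf
  have hGd : Differentiable ℝ (gradient f) := hG.differentiable one_ne_zero
  have hgcont : Continuous g := continuous_id.sub (hG.continuous.const_smul α)
  set D : E → (E →L[ℝ] E) := fun x => ContinuousLinearMap.id ℝ E - α • fderiv ℝ (gradient f) x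
    with hDdef
  have hDg : ∀ x : E, HasFDerivAt g (D x) x := by
    intro x
    exact (hasFDerivAt_id x).sub (((hGd x).hasFDerivAt).const_smul α)
  have hDcont : Continuous D := by
    exact continuous_const.sub ((hG.continuous_fderiv one_ne_zero).const_smul α)
  set T : E →L[ℝ] E := D p with hTdef
  have hTsymm : (T : E →ₗ[ℝ] E).IsSymmetric := by
    intro u v
    have h := hessian_symm f hf p u v
    simp only [hTdef, hDdef, ContinuousLinearMap.coe_coe, ContinuousLinearMap.sub_apply,
      ContinuousLinearMap.id_apply, ContinuousLinearMap.smul_apply]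
    rw [inner_sub_left, inner_sub_right, inner_smul_left, inner_smul_right]
    simp only [RCLike.conj_to_real, h]
  have hn : Module.finrank ℝ E = n := finrank_euclideanSpace_fin
  set b := hTsymm.eigenvectorBasis hn with hbdef
  set d := hTsymm.eigenvalues hn with hddef
  have hbd : ∀ i, T (b i) = d i • b i := fun i => hTsymm.apply_eigenvectorBasis hn i
  have hrepr0 : ∀ (w : E) (i : Fin n), b.repr (T w) i = d i * b.repr w i := by
    intro w i
    rw [b.repr_apply_apply, b.repr_apply_apply]
    have : (inner ℝ (b i) (T w) : ℝ) = inner ℝ (T (b i)) w := (hTsymm (b i) w).symm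
    rw [this, hbd i, real_inner_smul_left]
  have hrepr : ∀ (w : E), b.repr (T w) = WithLp.toLp 2 (fun i => d i * b.repr w i) := by
    intro w; ext i; exact hrepr0 w i
  have hexp : ∃ i, 1 < |d i| := by
    obtain ⟨hgrad0, μ, hμ, v, hv0, hvev⟩ := hp
    have hTv : T v = (1 - α * μ) • v := by
      simp only [hTdef, hDdef, ContinuousLinearMap.sub_apply, ContinuousLinearMap.id_apply,
        ContinuousLinearMap.smul_apply, hvev]
      rw [smul_smul, sub_smul, one_smul]
    have hv0' : b.repr v ≠ 0 := fun h => hv0 (by simpa using congrArg b.repr.symm h)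
    obtain ⟨i, hi⟩ := Function.ne_iff.mp (show (b.repr v).ofLp ≠ 0 from fun h => hv0' (PiLp.ext (congrFun h)))
    refine ⟨i, ?_⟩
    have h1 : b.repr (T v) i = d i * b.repr v i := hrepr0 v i
    have h2 : b.repr (T v) i = (1 - α * μ) * b.repr v i := by
      rw [hTv, LinearIsometryEquiv.map_smul]; simp
    have : d i = 1 - α * μ := by
      have := h1.symm.trans h2
      replace this := mul_eq_mul_right_iff.mp this
      rcases this with h | h
      · exact h
      · exact absurd h hi
    rw [this]
    have : 1 < 1 - α * μ := by nlinarith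
    rw [abs_of_pos (by linarith)]
    exact this
  obtain ⟨i₀, hi₀⟩ := hexp
  set u : Finset (Fin n) := Finset.univ.filter (fun i => 1 < |d i|) with hudef
  have hi₀u : i₀ ∈ u := by simp [hudef, hi₀]
  have hune : u.Nonempty := ⟨i₀, hi₀u⟩
  set a : ℝ := u.inf' hune (fun i => |d i|) with hadef
  have ha1 : 1 < a := by
    rw [hadef, Finset.lt_inf'_iff]
    intro i hi
    simp only [hudef, Finset.mem_filter] at hi
    exact hi.2
  have hau : ∀ i ∈ u, a ≤ |d i| := fun i hi => Finset.inf'_le _ hi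
  have hcu : ∀ i ∈ uᶜ, |d i| ≤ 1 := by
    intro i hi
    simp only [hudef, Finset.mem_compl, Finset.mem_filter, Finset.mem_univ, true_and,
      not_lt] at hi
    exact hi
  set ε : ℝ := (a - 1) / 4 with hεdef
  set ρ : ℝ := (a + 1) / 2 with hρdef
  have hρ1 : 1 < ρ := by rw [hρdef]; linarith
  have hε0 : 0 < ε := by rw [hεdef]; linarith
  -- choose the radius
  obtain ⟨δ, hδ0, hδ⟩ := Metric.continuousAt_iff.mp (hDcont.continuousAt (x := p)) ε hε0
  set r : ℝ := δ / 2 with hrdef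
  have hr0 : 0 < r := by rw [hrdef]; linarith
  have hrball : ∀ z ∈ Metric.closedBall p r, ‖D z - T‖ ≤ ε := by
    intro z hz
    rw [Metric.mem_closedBall] at hz
    have : dist z p < δ := by rw [hrdef] at hz; linarith
    have := hδ this
    rw [dist_eq_norm] at this
    exact le_of_lt this
  have hmvt : ∀ x ∈ Metric.closedBall p r, ∀ y ∈ Metric.closedBall p r,
      ‖g y - g x - T (y - x)‖ ≤ ε * ‖y - x‖ := by
    intro x hx y hy
    have hd : ∀ z ∈ Metric.closedBall p r,
        HasFDerivWithinAt (fun z => g z - T z) (D z - T) (Metric.closedBall p r) z :=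
      fun z _ => ((hDg z).sub (T.hasFDerivAt)).hasFDerivWithinAt
    have := Convex.norm_image_sub_le_of_norm_hasFDerivWithin_le hd
      (fun z hz => hrball z hz) (convex_closedBall p r) hx hy
    have heq : g y - T y - (g x - T x) = g y - g x - T (y - x) := by
      rw [map_sub]; abel
    rw [heq] at this
    exact this
  refine ⟨r, hr0, ?_⟩
  set S : Set E := {x : E | ∀ t : ℕ, g^[t] x ∈ Metric.closedBall p r} with hSdef
  have hSmeas : MeasurableSet S := by
    have : S = ⋂ t : ℕ, (g^[t]) ⁻¹' Metric.closedBall p r := by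
      ext z; simp [hSdef, Set.mem_iInter]
    rw [this]
    exact MeasurableSet.iInter fun t =>
      ((hgcont.iterate t).measurable) measurableSet_closedBall
  apply null_of_graph u b i₀ hi₀u S hSmeas
  intro x hx y hy hcoords
  -- reduce to the cone lemma
  have hQP : ‖coordProj uᶜ (b.repr (y - x))‖ ≤ ‖coordProj u (b.repr (y - x))‖ := by
    have hzero : coordProj uᶜ (b.repr (y - x)) = 0 := by
      ext i
      simp only [coordProj, PiLp.toLp_apply]
      split
      · next hiu =>
        rw [Finset.mem_compl] at hiu
        rw [LinearIsometryEquiv.map_sub]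
        show b.repr y i - b.repr x i = 0
        rw [← hcoords i hiu]
        ring
      · rfl
    rw [hzero, norm_zero]
    exact norm_nonneg _
  exact cone_lemma g T b d u a ε ρ r hr0 hρ1 hεdef hρdef ha1 hau hcu hrepr p hmvt
    coordProj_norm_le norm_le_coordProj coordProj_add
    (fun z => coordProj_mul_ge u d a (by linarith) hau z)
    (fun z => coordProj_mul_le uᶜ d hcu z)
    x hx y hy hQP


lemma preimage_null (g : E → E) (hg : ContDiff ℝ 1 g)
    (hZ : volume {x : E | (fderiv ℝ g x).det = 0} = 0)
    (N : Set (EuclideanSpace ℝ (Fin n))) (hN : volume N = 0) : volume (g ⁻¹' N) = 0 := by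
  classical
  obtain ⟨N', hNN', hN'm, hN'0⟩ := exists_measurable_superset_of_null hN
  set Z : Set (EuclideanSpace ℝ (Fin n)) := {x | (fderiv ℝ g x).det = 0} with hZdef
  have hdetcont : Continuous fun x : EuclideanSpace ℝ (Fin n) => (fderiv ℝ g x).det :=
    ContinuousLinearMap.continuous_det.comp (hg.continuous_fderiv one_ne_zero)
  have hZclosed : IsClosed Z := isClosed_eq hdetcont continuous_const
  -- local injectivity neighborhoods
  have hloc : ∀ x : EuclideanSpace ℝ (Fin n), x ∈ Zᶜ →
      ∃ U : Set (EuclideanSpace ℝ (Fin n)), IsOpen U ∧ x ∈ U ∧ Set.InjOn g U := by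
    intro x hx
    have hdet : (fderiv ℝ g x).det ≠ 0 := hx
    have hdet' : LinearMap.det ((fderiv ℝ g x) : E →ₗ[ℝ] E) ≠ 0 := hdet
    set eqv : E ≃ₗ[ℝ] E := LinearMap.equivOfDetNeZero _ hdet' with heqv
    set ceqv : E ≃L[ℝ] E := eqv.toContinuousLinearEquiv with hceqv
    have hcoe : (ceqv : E →L[ℝ] E) = fderiv ℝ g x := by
      ext z
      rfl
    have hstrict : HasStrictFDerivAt g (ceqv : E →L[ℝ] E) x := by
      rw [hcoe]
      exact hg.contDiffAt.hasStrictFDerivAt one_ne_zero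
    set PH := hstrict.toOpenPartialHomeomorph g with hPH
    refine ⟨PH.source, PH.open_source, hstrict.mem_toOpenPartialHomeomorph_source, ?_⟩
    have : Set.InjOn (PH : E → E) PH.source := PH.injOn
    rwa [hstrict.toOpenPartialHomeomorph_coe] at this
  choose U hUopen hUmem hUinj using hloc
  -- countable subcover of Zᶜ
  obtain ⟨tset, htc, hteq⟩ := TopologicalSpace.isOpen_iUnion_countable
    (fun x : ↥(Zᶜ) => U x.1 x.2) (fun x => hUopen x.1 x.2)
  have hcover : Zᶜ ⊆ ⋃ x ∈ tset, U (x : ↥(Zᶜ)).1 (x : ↥(Zᶜ)).2 := by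
    intro z hz
    have : z ∈ ⋃ x : ↥(Zᶜ), U x.1 x.2 := Set.mem_iUnion.mpr ⟨⟨z, hz⟩, hUmem z hz⟩
    rw [← hteq] at this
    simpa using this
  have hsub : g ⁻¹' N ⊆ Z ∪ ⋃ x ∈ tset, (g ⁻¹' N' ∩ U (x : ↥(Zᶜ)).1 (x : ↥(Zᶜ)).2 ∩ Zᶜ) := by
    intro z hz
    by_cases hzZ : z ∈ Z
    · exact Or.inl hzZ
    · right
      obtain ⟨i, hi, hzU⟩ := Set.mem_iUnion₂.mp (hcover hzZ)
      exact Set.mem_biUnion hi ⟨⟨hNN' hz, hzU⟩, hzZ⟩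
  apply measure_mono_null hsub
  rw [measure_union_null_iff]
  constructor
  · exact hZ
  · rw [measure_biUnion_null_iff htc]
    intro x hxt
    set s : Set (EuclideanSpace ℝ (Fin n)) := g ⁻¹' N' ∩ U x.1 x.2 ∩ Zᶜ with hsdef
    have hsm : MeasurableSet s :=
      ((hg.continuous.measurable hN'm).inter (hUopen x.1 x.2).measurableSet).inter
        hZclosed.measurableSet.compl
    have hfd : ∀ z ∈ s, HasFDerivWithinAt g (fderiv ℝ g z) s z := fun z _ =>
      ((hg.differentiable one_ne_zero) z).hasFDerivAt.hasFDerivWithinAt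
    have hinj : Set.InjOn g s := (hUinj x.1 x.2).mono (by intro z hz; exact hz.1.2)
    have harea := lintegral_abs_det_fderiv_eq_addHaar_image volume hsm hfd hinj
    have himg : volume (g '' s) = 0 := by
      apply measure_mono_null _ hN'0
      intro w hw
      obtain ⟨z, hz, rfl⟩ := hw
      exact hz.1.1
    rw [himg] at harea
    have hmeas : Measurable fun z : EuclideanSpace ℝ (Fin n) =>
        ENNReal.ofReal |(fderiv ℝ g z).det| :=
      (ENNReal.measurable_ofReal.comp (hdetcont.abs.measurable))
    rw [setLIntegral_eq_zero_iff hsm hmeas] at harea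
    have hae := ae_iff.mp harea
    apply measure_mono_null _ hae
    intro z hz
    have hzdet : (fderiv ℝ g z).det ≠ 0 := hz.2
    simp only [Set.mem_setOf_eq, Classical.not_imp]
    exact ⟨hz, (ENNReal.ofReal_eq_zero).not.mpr (not_le.mpr (abs_pos.mpr hzdet))⟩


lemma slice_finite (M : EuclideanSpace ℝ (Fin n) →L[ℝ] EuclideanSpace ℝ (Fin n)) :
    {α : ℝ | (ContinuousLinearMap.id ℝ (EuclideanSpace ℝ (Fin n)) - α • M).det = 0}.Finite := by
  classical
  have hsub : {α : ℝ | (ContinuousLinearMap.id ℝ (EuclideanSpace ℝ (Fin n)) - α • M).det = 0}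
      ⊆ (fun μ : ℝ => μ⁻¹) '' {μ : ℝ | (minpoly ℝ ((M : E →ₗ[ℝ] E))).IsRoot μ} := by
    intro α hα
    have hdet : LinearMap.det ((ContinuousLinearMap.id ℝ (EuclideanSpace ℝ (Fin n)) - α • M :
        E →L[ℝ] E) : E →ₗ[ℝ] E) = 0 := hα
    have hker := LinearMap.bot_lt_ker_of_det_eq_zero hdet
    have hne : LinearMap.ker ((ContinuousLinearMap.id ℝ (EuclideanSpace ℝ (Fin n)) - α • M :
        E →L[ℝ] E) : E →ₗ[ℝ] E) ≠ ⊥ := hker.ne'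
    obtain ⟨v, hvmem, hv0⟩ := Submodule.exists_mem_ne_zero_of_ne_bot hne
    have hvker : v - α • M v = 0 := by
      have := hvmem
      rw [LinearMap.mem_ker] at this
      simpa using this
    have hα0 : α ≠ 0 := by
      intro h
      rw [h, zero_smul, sub_zero] at hvker
      exact hv0 hvker
    have hev : (M : E →ₗ[ℝ] E) v = α⁻¹ • v := by
      have h1 : v = α • M v := by
        have h3 : v - α • M v + α • M v = 0 + α • M v := by rw [hvker]
        simpa using h3
      calc (M : E →ₗ[ℝ] E) v = M v := rfl
        _ = α⁻¹ • (α • M v) := by rw [smul_smul, inv_mul_cancel₀ hα0, one_smul]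
        _ = α⁻¹ • v := by rw [← h1]
    have : Module.End.HasEigenvalue (M : E →ₗ[ℝ] E) α⁻¹ :=
      Module.End.hasEigenvalue_of_hasEigenvector ⟨Module.End.mem_eigenspace_iff.mpr hev, hv0⟩
    refine ⟨α⁻¹, ?_, inv_inv α⟩
    exact Module.End.hasEigenvalue_iff_isRoot.mp this
  exact Set.Finite.subset (Set.Finite.image _ (Polynomial.finite_setOf_isRoot
    (minpoly.ne_zero (Algebra.IsIntegral.isIntegral (R := ℝ) ((M : E →ₗ[ℝ] E)))))) hsub

lemma ae_det_null (H : EuclideanSpace ℝ (Fin n) → (EuclideanSpace ℝ (Fin n) →L[ℝ] EuclideanSpace ℝ (Fin n)))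
    (hH : Continuous H) :
    ∀ᵐ α ∂(volume : Measure ℝ),
      volume {x : EuclideanSpace ℝ (Fin n) |
        (ContinuousLinearMap.id ℝ (EuclideanSpace ℝ (Fin n)) - α • H x).det = 0} = 0 := by
  classical
  set B : Set ((EuclideanSpace ℝ (Fin n)) × ℝ) :=
    {q | (ContinuousLinearMap.id ℝ (EuclideanSpace ℝ (Fin n)) - q.2 • H q.1).det = 0} with hBdef
  have hBclosed : IsClosed B := by
    apply isClosed_eq _ continuous_const
    apply ContinuousLinearMap.continuous_det.comp
    exact continuous_const.sub (continuous_snd.smul (hH.comp continuous_fst))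
  have hBnull : (volume : Measure (EuclideanSpace ℝ (Fin n))).prod (volume : Measure ℝ) B = 0 := by
    rw [Measure.measure_prod_null hBclosed.measurableSet]
    apply ae_of_all
    intro x
    exact Set.Finite.measure_zero (slice_finite (H x)) _
  -- swap
  set B' : Set (ℝ × EuclideanSpace ℝ (Fin n)) := Prod.swap ⁻¹' B with hB'def
  have hB'null : (volume : Measure ℝ).prod (volume : Measure (EuclideanSpace ℝ (Fin n))) B' = 0 := by
    have hswap := Measure.measurePreserving_swap (μ := (volume : Measure ℝ))
      (ν := (volume : Measure (EuclideanSpace ℝ (Fin n))))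
    rw [hB'def, hswap.measure_preimage hBclosed.measurableSet.nullMeasurableSet]
    exact hBnull
  have := Measure.measure_ae_null_of_prod_null hB'null
  filter_upwards [this] with α hα
  exact hα
/-- For a `C²` function `f : ℝⁿ → ℝ` and almost all step sizes `α > 0`, gradient descent
with constant step size `α` avoids the strict saddles of `f`: the set of initial points
from which the iterates converge to a strict saddle has Lebesgue measure zero. -/
theorem ae_stepsize_gd_avoids_strict_saddles {n : ℕ}
    (f : EuclideanSpace ℝ (Fin n) → ℝ) (hf : ContDiff ℝ 2 f) :
    ∀ᵐ α ∂(volume : Measure ℝ), 0 < α →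
      volume {x₀ : EuclideanSpace ℝ (Fin n) |
        ∃ p, IsStrictSaddle f p ∧
          Tendsto (fun t => (fun x => x - α • gradient f x)^[t] x₀) atTop (𝓝 p)} = 0 := by
  classical
  have hG : ContDiff ℝ 1 (gradient f) := gradient_contDiff f hf
  filter_upwards [ae_det_null (fun x : EuclideanSpace ℝ (Fin n) => fderiv ℝ (gradient f) x)
    (hG.continuous_fderiv one_ne_zero)] with α hdet hα
  set g : EuclideanSpace ℝ (Fin n) → EuclideanSpace ℝ (Fin n) :=
    fun x => x - α • gradient f x with hgdef
  have hgC : ContDiff ℝ 1 g := contDiff_id.sub (hG.const_smul α)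
  have hDg : ∀ x, HasFDerivAt g
      (ContinuousLinearMap.id ℝ (EuclideanSpace ℝ (Fin n)) - α • fderiv ℝ (gradient f) x) x :=
    fun x => (hasFDerivAt_id x).sub ((((hG.differentiable one_ne_zero) x).hasFDerivAt).const_smul α)
  have hZ : volume {x : EuclideanSpace ℝ (Fin n) | (fderiv ℝ g x).det = 0} = 0 := by
    have hseteq : {x : EuclideanSpace ℝ (Fin n) | (fderiv ℝ g x).det = 0}
        = {x : EuclideanSpace ℝ (Fin n) |
            (ContinuousLinearMap.id ℝ (EuclideanSpace ℝ (Fin n))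
              - α • fderiv ℝ (gradient f) x).det = 0} := by
      ext x
      rw [Set.mem_setOf_eq, Set.mem_setOf_eq, (hDg x).fderiv]
    rw [hseteq]
    exact hdet
  -- radii around each strict saddle
  have hex : ∀ p : {p : EuclideanSpace ℝ (Fin n) // IsStrictSaddle f p},
      ∃ r > 0, volume {x : EuclideanSpace ℝ (Fin n) | ∀ t : ℕ,
        g^[t] x ∈ Metric.closedBall p.1 r} = 0 :=
    fun p => local_null f hf α hα p.1 p.2
  choose R hR0 hRnull using hex
  obtain ⟨tset, htc, hteq⟩ := TopologicalSpace.isOpen_iUnion_countable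
    (fun p : {p : EuclideanSpace ℝ (Fin n) // IsStrictSaddle f p} => Metric.ball p.1 (R p / 2))
    (fun p => Metric.isOpen_ball)
  -- iterated preimages of null sets are null
  have hiter : ∀ (N : Set (EuclideanSpace ℝ (Fin n))), volume N = 0 →
      ∀ k : ℕ, volume ((g^[k]) ⁻¹' N) = 0 := by
    intro N hN k
    induction k with
    | zero => simpa using hN
    | succ m ih =>
      rw [Function.iterate_succ, Set.preimage_comp]
      exact preimage_null g hgC hZ _ ih
  -- covering of the bad set
  apply measure_mono_null
    (t := ⋃ σ ∈ tset, ⋃ k : ℕ, (g^[k]) ⁻¹' {x : EuclideanSpace ℝ (Fin n) | ∀ t : ℕ,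
      g^[t] x ∈ Metric.closedBall (σ : {p : EuclideanSpace ℝ (Fin n) // IsStrictSaddle f p}).1 (R σ)})
  · intro x₀ hx₀
    obtain ⟨q, hq, htend⟩ := hx₀
    have hqmem : q ∈ ⋃ p : {p : EuclideanSpace ℝ (Fin n) // IsStrictSaddle f p},
        Metric.ball p.1 (R p / 2) := by
      refine Set.mem_iUnion.mpr ⟨⟨q, hq⟩, ?_⟩
      have := hR0 ⟨q, hq⟩
      simp only [Metric.mem_ball, dist_self]
      linarith
    rw [← hteq] at hqmem
    obtain ⟨σ, hσt, hqσ⟩ := Set.mem_iUnion₂.mp hqmem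
    rw [Metric.mem_ball] at hqσ
    have hε : 0 < R σ / 2 := by have := hR0 σ; linarith
    obtain ⟨K, hK⟩ := (Metric.tendsto_atTop.mp htend) (R σ / 2) hε
    refine Set.mem_biUnion hσt (Set.mem_iUnion.mpr ⟨K, ?_⟩)
    intro t
    have hiterate : g^[t] (g^[K] x₀) = g^[t + K] x₀ := (Function.iterate_add_apply g t K x₀).symm
    show g^[t] (g^[K] x₀) ∈ Metric.closedBall σ.1 (R σ)
    rw [hiterate, Metric.mem_closedBall]
    have h1 := hK (t + K) (Nat.le_add_left K t)
    calc dist (g^[t+K] x₀) σ.1 ≤ dist (g^[t+K] x₀) q + dist q σ.1 := dist_triangle _ _ _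
      _ ≤ R σ / 2 + R σ / 2 := add_le_add (le_of_lt h1) (le_of_lt hqσ)
      _ = R σ := by ring
  · rw [measure_biUnion_null_iff htc]
    intro σ hσ
    apply measure_iUnion_null
    intro k
    exact hiter _ (hRnull σ) k
end
end

section
/- Let f : ℝⁿ → ℝ be C² and let τ ∈ (0,1). Then for almost all ᾱ > 0 (with respect to Lebesgue measure on ℝ), for every integer i ≥ 0, the gradient descent map g_{(i)} : ℝⁿ → ℝⁿ defined by g_{(i)}(x) = x − τ^i ᾱ ∇f(x) has the Luzin N⁻¹ property. -/
open MeasureTheory Filter Topology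

noncomputable section

set_option linter.unusedSectionVars false

section Aux

variable {E : Type*} [NormedAddCommGroup E] [InnerProductSpace ℝ E]
  [FiniteDimensional ℝ E] [MeasurableSpace E] [BorelSpace E]

/-- A `C¹` self-map of a finite-dimensional space whose derivative is invertible almost
everywhere pulls back null sets to null sets. -/
theorem luzin_aux (μ : Measure E) [μ.IsAddHaarMeasure] (g : E → E) (hg : ContDiff ℝ 1 g)
    (h : ∀ᵐ x ∂μ, (fderiv ℝ g x).det ≠ 0) :
    ∀ A : Set E, μ A = 0 → μ (g ⁻¹' A) = 0 := by
  intro A hA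
  obtain ⟨A', hAA', hA'meas, hA'0⟩ := exists_measurable_superset_of_null hA
  set U : Set E := {x | (fderiv ℝ g x).det ≠ 0} with hU
  have hUopen : IsOpen U := by
    have hcont : Continuous fun x => (fderiv ℝ g x).det :=
      ContinuousLinearMap.continuous_det.comp (hg.continuous_fderiv one_ne_zero)
    exact isOpen_compl_singleton.preimage hcont
  have hUc : μ Uᶜ = 0 := by
    rw [ae_iff] at h
    simpa [U, Set.compl_setOf] using h
  have key : μ (g ⁻¹' A' ∩ U) = 0 := by
    apply measure_null_of_locally_null
    intro x hx
    have hdet : (fderiv ℝ g x).det ≠ 0 := hx.2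
    set Φ := (fderiv ℝ g x).toContinuousLinearEquivOfDetNeZero hdet with hΦ
    have hstrict : HasStrictFDerivAt g (Φ : E →L[ℝ] E) x := by
      rw [hΦ, ContinuousLinearMap.coe_toContinuousLinearEquivOfDetNeZero]
      exact hg.contDiffAt.hasStrictFDerivAt one_ne_zero
    set PH := hstrict.toOpenPartialHomeomorph g with hPH
    set Q := PH.restrOpen U hUopen with hQdef
    have hQcoe : (Q : E → E) = g := by
      rw [hQdef, hPH]
      rfl
    have hQsource : Q.source = PH.source ∩ U := PH.restrOpen_source U hUopen
    have hxQ : x ∈ Q.source := by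
      rw [hQsource]
      exact ⟨hstrict.mem_toOpenPartialHomeomorph_source, hx.2⟩
    -- the local inverse is differentiable on the target, hence maps null sets to null sets
    have hder : ∀ y ∈ A' ∩ Q.target,
        HasFDerivWithinAt Q.symm (fderiv ℝ Q.symm y) (A' ∩ Q.target) y := by
      intro y hy
      have hyt : y ∈ Q.target := hy.2
      have hys : Q.symm y ∈ Q.source := Q.map_target hyt
      have hysU : Q.symm y ∈ U := by rw [hQsource] at hys; exact hys.2
      set Ψ := (fderiv ℝ g (Q.symm y)).toContinuousLinearEquivOfDetNeZero hysU with hΨ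
      have hstricty : HasStrictFDerivAt g (Ψ : E →L[ℝ] E) (Q.symm y) := by
        rw [hΨ, ContinuousLinearMap.coe_toContinuousLinearEquivOfDetNeZero]
        exact hg.contDiffAt.hasStrictFDerivAt one_ne_zero
      have hstrictQ : HasStrictFDerivAt Q (Ψ : E →L[ℝ] E) (Q.symm y) := by
        rw [hQcoe]; exact hstricty
      have hsymm : HasStrictFDerivAt Q.symm (Ψ.symm : E →L[ℝ] E) y :=
        Q.hasStrictFDerivAt_symm hyt hstrictQ
      have := hsymm.hasFDerivAt
      rw [← this.fderiv] at this
      exact this.hasFDerivWithinAt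
    have himg : μ (Q.symm '' (A' ∩ Q.target)) = 0 := by
      have hmeas : MeasurableSet (A' ∩ Q.target) := hA'meas.inter Q.open_target.measurableSet
      have h1 := addHaar_image_le_lintegral_abs_det_fderiv μ hmeas hder
      have h2 : μ (A' ∩ Q.target) = 0 := measure_mono_null Set.inter_subset_left hA'0
      rw [setLIntegral_measure_zero _ _ h2] at h1
      exact le_antisymm h1 zero_le
    refine ⟨Q.source ∩ (g ⁻¹' A' ∩ U), Filter.inter_mem
      (mem_nhdsWithin_of_mem_nhds (Q.open_source.mem_nhds hxQ)) self_mem_nhdsWithin, ?_⟩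
    refine measure_mono_null ?_ himg
    rintro z ⟨hzQ, hzA', _⟩
    refine ⟨Q z, ⟨?_, Q.map_source hzQ⟩, Q.left_inv hzQ⟩
    rw [hQcoe] at *
    show g z ∈ A'
    exact hzA'
  have hsub : g ⁻¹' A ⊆ (g ⁻¹' A' ∩ U) ∪ Uᶜ := by
    intro z hz
    by_cases hzU : z ∈ U
    · exact Or.inl ⟨hAA' hz, hzU⟩
    · exact Or.inr hzU
  exact measure_mono_null hsub (measure_union_null key hUc)

/-- For a fixed endomorphism `H`, the set of `t` with `1 - t • H` singular is finite. -/
theorem finite_bad_t (H : E →L[ℝ] E) :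
    {t : ℝ | (ContinuousLinearMap.id ℝ E - t • H).det = 0}.Finite := by
  classical
  let b := Module.finBasis ℝ E
  let M := LinearMap.toMatrix b b (H : E →ₗ[ℝ] E)
  have hdet : ∀ t : ℝ, (ContinuousLinearMap.id ℝ E - t • H).det = M.charpolyRev.eval t := by
    intro t
    have hcoe : ((ContinuousLinearMap.id ℝ E - t • H : E →L[ℝ] E) : E →ₗ[ℝ] E)
        = 1 - t • (H : E →ₗ[ℝ] E) := by
      ext v; simp
    show LinearMap.det _ = _
    rw [hcoe, ← LinearMap.det_toMatrix b]
    have hmat : LinearMap.toMatrix b b (1 - t • (H : E →ₗ[ℝ] E)) = 1 - t • M := by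
      simp [map_sub, _root_.map_smul, LinearMap.toMatrix_one, M]
    rw [hmat, Matrix.charpolyRev, ← Polynomial.coe_evalRingHom, RingHom.map_det]
    congr 1
    ext i j
    simp [Matrix.map_apply, Matrix.one_apply, apply_ite]
    ring
  have hne : M.charpolyRev ≠ 0 := by
    intro h0
    have := Matrix.eval_charpolyRev (M := M)
    rw [h0] at this
    simp at this
  refine (Polynomial.finite_setOf_isRoot hne).subset ?_
  intro t ht
  simp only [Set.mem_setOf_eq] at ht ⊢
  rw [Polynomial.IsRoot, ← hdet t]
  exact ht

/-- Fubini: the set of "bad" step sizes `t`, for which the derivative `1 - t∇²f` is singular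
on a set of positive measure, is Lebesgue-null. -/
theorem bad_stepsize_null (μ : Measure E) [μ.IsAddHaarMeasure] [SigmaFinite μ]
    (f : E → ℝ) (hf : ContDiff ℝ 2 f) :
    volume {t : ℝ | μ {x : E |
      (ContinuousLinearMap.id ℝ E - t • fderiv ℝ (gradient f) x).det = 0} ≠ 0} = 0 := by
  have hG : ContDiff ℝ 1 (gradient f) := by
    have hfd2 : ContDiff ℝ 1 (fderiv ℝ f) := hf.fderiv_right (by norm_num)
    exact ((InnerProductSpace.toDual ℝ E).symm.contDiff).comp hfd2
  set H : E → (E →L[ℝ] E) := fun x => fderiv ℝ (gradient f) x with hHdef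
  have hHcont : Continuous H := hG.continuous_fderiv one_ne_zero
  set T : Set (E × ℝ) :=
    {p | (ContinuousLinearMap.id ℝ E - p.2 • H p.1).det = 0} with hTdef
  have hTmeas : MeasurableSet T := by
    have hcont : Continuous fun p : E × ℝ =>
        (ContinuousLinearMap.id ℝ E - p.2 • H p.1).det :=
      ContinuousLinearMap.continuous_det.comp
        (continuous_const.sub (continuous_snd.smul (hHcont.comp continuous_fst)))
    exact (isClosed_singleton.preimage hcont).measurableSet
  have hT0 : (μ.prod (volume : Measure ℝ)) T = 0 := by
    rw [Measure.measure_prod_null hTmeas]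
    refine ae_of_all _ fun x => ?_
    have hfin : {t : ℝ | (ContinuousLinearMap.id ℝ E - t • H x).det = 0}.Finite :=
      finite_bad_t (H x)
    exact hfin.measure_zero volume
  set S : Set (ℝ × E) := Prod.swap ⁻¹' T with hSdef
  have hS0 : ((volume : Measure ℝ).prod μ) S = 0 := by
    have := Measure.map_apply (μ := ((volume : Measure ℝ).prod μ))
      measurable_swap hTmeas
    rw [Measure.prod_swap] at this
    rw [hSdef, ← this, hT0]
  have h3 := Measure.measure_ae_null_of_prod_null hS0
  rw [EventuallyEq, ae_iff] at h3
  exact h3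

end Aux

/-- For a `C²` function `f : ℝⁿ → ℝ`, `τ ∈ (0,1)` and almost all `ᾱ > 0`, all the gradient
descent maps `g_{(i)}(x) = x − τⁱᾱ∇f(x)`, `i ∈ ℕ`, have the Luzin `N⁻¹` property. -/
theorem ae_initial_stepsize_all_gd_maps_luzin {n : ℕ}
    (f : EuclideanSpace ℝ (Fin n) → ℝ) (hf : ContDiff ℝ 2 f)
    (τ : ℝ) (hτ : τ ∈ Set.Ioo (0 : ℝ) 1) :
    ∀ᵐ abar ∂(volume : Measure ℝ), 0 < abar →
      ∀ i : ℕ, LuzinNInv (fun x => x - (τ ^ i * abar) • gradient f x) := by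
  classical
  have hG : ContDiff ℝ 1 (gradient f) := by
    have hfd2 : ContDiff ℝ 1 (fderiv ℝ f) := hf.fderiv_right (by norm_num)
    exact ((InnerProductSpace.toDual ℝ (EuclideanSpace ℝ (Fin n))).symm.contDiff).comp hfd2
  set Bad := {t : ℝ | volume {x : EuclideanSpace ℝ (Fin n) |
      (ContinuousLinearMap.id ℝ (EuclideanSpace ℝ (Fin n))
        - t • fderiv ℝ (gradient f) x).det = 0} ≠ 0} with hBad
  have hBad0 : volume Bad = 0 := bad_stepsize_null volume f hf
  obtain ⟨B', hBB', hB'meas, hB'0⟩ := exists_measurable_superset_of_null hBad0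
  have hAE : ∀ᵐ abar ∂(volume : Measure ℝ), ∀ i : ℕ, τ ^ i * abar ∉ B' := by
    rw [ae_all_iff]
    intro i
    have hci : (τ : ℝ) ^ i ≠ 0 := pow_ne_zero _ (ne_of_gt hτ.1)
    have hpre : volume ((fun a => τ ^ i * a) ⁻¹' B') = 0 := by
      rw [Real.volume_preimage_mul_left hci, hB'0, mul_zero]
    rw [ae_iff]
    convert hpre using 2
    ext a
    simp
  filter_upwards [hAE] with abar habar hpos i
  intro A hA
  set t := τ ^ i * abar with ht
  have hnot : t ∉ Bad := fun h => habar i (hBB' h)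
  have hvol : volume {x : EuclideanSpace ℝ (Fin n) |
      (ContinuousLinearMap.id ℝ (EuclideanSpace ℝ (Fin n))
        - t • fderiv ℝ (gradient f) x).det = 0} = 0 := by
    by_contra hc
    exact hnot hc
  have hg1 : ContDiff ℝ 1 (fun x : EuclideanSpace ℝ (Fin n) => x - t • gradient f x) :=
    contDiff_id.sub (hG.const_smul t)
  have hfd : ∀ x : EuclideanSpace ℝ (Fin n),
      HasFDerivAt (fun x => x - t • gradient f x)
        (ContinuousLinearMap.id ℝ (EuclideanSpace ℝ (Fin n))
          - t • fderiv ℝ (gradient f) x) x := fun x =>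
    (hasFDerivAt_id x).sub ((hG.differentiable one_ne_zero x).hasFDerivAt.const_smul t)
  have hae : ∀ᵐ x ∂(volume : Measure (EuclideanSpace ℝ (Fin n))),
      (fderiv ℝ (fun x => x - t • gradient f x) x).det ≠ 0 := by
    rw [ae_iff]
    convert hvol using 2
    ext x
    simp [(hfd x).fderiv]
  exact luzin_aux volume _ hg1 hae A hA
end
end
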